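/- arXiv:2409.14123 — 5 statements merged into one kernel-verified Lean document; each statement's English description precedes it below -/
import Mathlib

section
/- Let N_k(M) be the class of two-layer ReLU networks g(x) = Σ_{j=1}^k a_j σ_relu(θ_j^T x + b_j) on B_1^d ⊆ ℝ^d with path norm J(g) = Σ_{j=1}^k |a_j| ‖(θ_j, b_j)‖_2 ≤ M. Then there is a constant c(d) depending only on d such that for every M > 0, every k, every n and every choice of points x_1,…,x_n ∈ B_1^d, both the empirical Rademacher complexity and the empirical Gaussian complexity of N_k(M) at x_1,…,x_n are at most c(d)·M/√n. -/
open MeasureTheory ProbabilityTheory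

abbrev Euc (d : ℕ) := EuclideanSpace ℝ (Fin d)

/-- Two-layer ReLU networks `g(x) = Σ_{j=1}^k a_j σ_relu(θ_j^T x + b_j)` with path norm
`J(g) = Σ_j |a_j| ‖(θ_j, b_j)‖₂ ≤ M`. -/
def reluClass (d k : ℕ) (M : ℝ) : Set (Euc d → ℝ) :=
  {g | ∃ (a : Fin k → ℝ) (θ : Fin k → Euc d) (b : Fin k → ℝ),
    (∀ x, g x = ∑ j : Fin k, a j * max (∑ l : Fin d, θ j l * x l + b j) 0) ∧
    ∑ j : Fin k, |a j| * Real.sqrt (‖θ j‖ ^ 2 + b j ^ 2) ≤ M}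

/-- Empirical Rademacher complexity. -/
noncomputable def empRad {E : Type*} (n : ℕ) (F : Set (E → ℝ)) (x : Fin n → E) : ℝ :=
  (1 / (2 ^ n : ℝ)) * ∑ s : Fin n → Bool,
    (1 / (n : ℝ)) *
      sSup ((fun g : E → ℝ => |∑ i : Fin n, (if s i then (1 : ℝ) else -1) * g (x i)|) '' F)

/-- Empirical Gaussian complexity. -/
noncomputable def empGauss {E : Type*} (n : ℕ) (F : Set (E → ℝ)) (x : Fin n → E) : ℝ :=
  ∫ ε : Fin n → ℝ,
    (1 / (n : ℝ)) * sSup ((fun g : E → ℝ => |∑ i : Fin n, ε i * g (x i)|) '' F)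
      ∂(Measure.pi fun _ => gaussianReal 0 1)


section Prop1Aux
open Real



variable {E : Type*} [NormedAddCommGroup E] [InnerProductSpace ℝ E]

local notation "⟪" x ", " y "⟫" => @inner ℝ _ _ x y

/-- contraction property -/
def Contr (ψ : ℝ → ℝ) : Prop := ψ 0 = 0 ∧ ∀ u u', |ψ u - ψ u'| ≤ |u - u'|

lemma contr_id : Contr (id : ℝ → ℝ) := ⟨rfl, fun _ _ => le_refl _⟩

lemma contr_relu : Contr (fun t : ℝ => max t 0) :=
  ⟨by simp, fun u u' => abs_max_sub_max_le_abs u u' 0⟩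

lemma contr_neg_relu : Contr (fun t : ℝ => -max t 0) :=
  ⟨by simp, fun u u' => by
    rw [neg_sub_neg, abs_sub_comm]; exact abs_max_sub_max_le_abs u u' 0⟩

lemma Contr.abs_le {ψ : ℝ → ℝ} (h : Contr ψ) (u : ℝ) : |ψ u| ≤ |u| := by
  have := h.2 u 0
  simpa [h.1] using this

variable (v : E)

/-- the unit ball subtype -/
abbrev UB (E : Type*) [NormedAddCommGroup E] := {w : E // ‖w‖ ≤ 1}

instance : Nonempty (UB E) := ⟨⟨0, by simp⟩⟩

variable {n : ℕ}

/-- sup over the unit ball of `Σ_i c i * ψ i ⟪w, v i⟫`. -/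
noncomputable def bsup (v : Fin n → E) (ψ : Fin n → ℝ → ℝ) (c : Fin n → ℝ) : ℝ :=
  ⨆ w : UB E, ∑ i, c i * ψ i ⟪(w : E), v i⟫

variable {v : Fin n → E}

lemma elt_bound (hv : ∀ i, ‖v i‖ ≤ Real.sqrt 2) {ψ : Fin n → ℝ → ℝ}
    (hψ : ∀ i, Contr (ψ i)) (c : Fin n → ℝ) (w : UB E) :
    |∑ i, c i * ψ i ⟪(w : E), v i⟫| ≤ Real.sqrt 2 * ∑ i, |c i| := by
  calc |∑ i, c i * ψ i ⟪(w : E), v i⟫| ≤ ∑ i, |c i * ψ i ⟪(w : E), v i⟫| :=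
        Finset.abs_sum_le_sum_abs _ _
    _ ≤ ∑ i, |c i| * Real.sqrt 2 := by
        refine Finset.sum_le_sum fun i _ => ?_
        rw [abs_mul]
        refine mul_le_mul_of_nonneg_left ?_ (abs_nonneg _)
        refine le_trans ((hψ i).abs_le _) ?_
        refine le_trans (abs_real_inner_le_norm _ _) ?_
        calc ‖(w : E)‖ * ‖v i‖ ≤ 1 * Real.sqrt 2 :=
              mul_le_mul w.2 (hv i) (norm_nonneg _) zero_le_one
          _ = Real.sqrt 2 := one_mul _
    _ = Real.sqrt 2 * ∑ i, |c i| := by rw [Finset.mul_sum]; simp [mul_comm]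

lemma bsup_bddAbove (hv : ∀ i, ‖v i‖ ≤ Real.sqrt 2) {ψ : Fin n → ℝ → ℝ}
    (hψ : ∀ i, Contr (ψ i)) (c : Fin n → ℝ) :
    BddAbove (Set.range fun w : UB E => ∑ i, c i * ψ i ⟪(w : E), v i⟫) := by
  refine ⟨Real.sqrt 2 * ∑ i, |c i|, ?_⟩
  rintro _ ⟨w, rfl⟩
  exact le_of_abs_le (elt_bound hv hψ c w)

lemma le_bsup (hv : ∀ i, ‖v i‖ ≤ Real.sqrt 2) {ψ : Fin n → ℝ → ℝ}
    (hψ : ∀ i, Contr (ψ i)) (c : Fin n → ℝ) (w : UB E) :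
    ∑ i, c i * ψ i ⟪(w : E), v i⟫ ≤ bsup v ψ c :=
  le_ciSup (bsup_bddAbove hv hψ c) w

lemma bsup_nonneg (hv : ∀ i, ‖v i‖ ≤ Real.sqrt 2) {ψ : Fin n → ℝ → ℝ}
    (hψ : ∀ i, Contr (ψ i)) (c : Fin n → ℝ) : 0 ≤ bsup v ψ c := by
  have h := le_bsup hv hψ c ⟨0, by simp⟩
  simpa [(hψ _).1] using h

lemma bsup_le {ψ : Fin n → ℝ → ℝ} {c : Fin n → ℝ} {a : ℝ}
    (h : ∀ w : UB E, ∑ i, c i * ψ i ⟪(w : E), v i⟫ ≤ a) : bsup v ψ c ≤ a :=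
  ciSup_le h

lemma bsup_abs_le (hv : ∀ i, ‖v i‖ ≤ Real.sqrt 2) {ψ : Fin n → ℝ → ℝ}
    (hψ : ∀ i, Contr (ψ i)) (c : Fin n → ℝ) :
    |bsup v ψ c| ≤ Real.sqrt 2 * ∑ i, |c i| := by
  rw [abs_le]
  constructor
  · refine le_trans ?_ (bsup_nonneg hv hψ c)
    have : 0 ≤ Real.sqrt 2 * ∑ i, |c i| := by positivity
    linarith
  · exact bsup_le fun w => le_of_abs_le (elt_bound hv hψ c w)


lemma contr_update {ψ : Fin n → ℝ → ℝ} (hψ : ∀ i, Contr (ψ i)) (j : Fin n) :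
    ∀ i, Contr (Function.update ψ j id i) := by
  intro i
  rcases eq_or_ne i j with rfl | h
  · rw [Function.update_self]; exact contr_id
  · rw [Function.update_of_ne h]; exact hψ i

lemma bsup_step (hv : ∀ i, ‖v i‖ ≤ Real.sqrt 2) {ψ : Fin n → ℝ → ℝ}
    (hψ : ∀ i, Contr (ψ i)) (j : Fin n) (c : Fin n → ℝ) :
    bsup v ψ c + bsup v ψ (Function.update c j (-(c j))) ≤
      bsup v (Function.update ψ j id) c +
        bsup v (Function.update ψ j id) (Function.update c j (-(c j))) := by
  set ψ' := Function.update ψ j id with hψ'def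
  set c' := Function.update c j (-(c j)) with hc'def
  have hψ' : ∀ i, Contr (ψ' i) := contr_update hψ j
  set A : UB E → ℝ := fun w => ∑ i ∈ Finset.univ.erase j, c i * ψ i ⟪(w : E), v i⟫ with hA
  set t : UB E → ℝ := fun w => ⟪(w : E), v j⟫ with ht
  have f1 : ∀ w : UB E, ∑ i, c i * ψ i ⟪(w : E), v i⟫ = A w + c j * ψ j (t w) := by
    intro w
    rw [hA]
    exact (Finset.sum_erase_add _ _ (Finset.mem_univ j)).symm
  have erase_eq : ∀ (g : Fin n → ℝ → ℝ) (b : Fin n → ℝ), (∀ i, i ≠ j → g i = ψ i ∧ b i = c i) →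
      ∀ w : UB E, ∑ i ∈ Finset.univ.erase j, b i * g i ⟪(w : E), v i⟫ = A w := by
    intro g b hgb w
    refine Finset.sum_congr rfl fun i hi => ?_
    have hij : i ≠ j := (Finset.mem_erase.1 hi).1
    rw [(hgb i hij).1, (hgb i hij).2]
  have f2 : ∀ w : UB E, ∑ i, c' i * ψ i ⟪(w : E), v i⟫ = A w - c j * ψ j (t w) := by
    intro w
    rw [← Finset.sum_erase_add _ _ (Finset.mem_univ j),
      erase_eq ψ c' (fun i hij => ⟨rfl, Function.update_of_ne hij _ _⟩) w]
    simp [hc'def, sub_eq_add_neg, ht]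
  have f3 : ∀ w : UB E, ∑ i, c i * ψ' i ⟪(w : E), v i⟫ = A w + c j * t w := by
    intro w
    rw [← Finset.sum_erase_add _ _ (Finset.mem_univ j),
      erase_eq ψ' c (fun i hij => ⟨Function.update_of_ne hij _ _, rfl⟩) w]
    simp [hψ'def, ht]
  have f4 : ∀ w : UB E, ∑ i, c' i * ψ' i ⟪(w : E), v i⟫ = A w - c j * t w := by
    intro w
    rw [← Finset.sum_erase_add _ _ (Finset.mem_univ j),
      erase_eq ψ' c' (fun i hij => ⟨Function.update_of_ne hij _ _,
        Function.update_of_ne hij _ _⟩) w]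
    simp [hψ'def, hc'def, sub_eq_add_neg, ht]
  set R₁ := bsup v ψ' c with hR₁
  set R₂ := bsup v ψ' c' with hR₂
  have b3 : ∀ w : UB E, A w + c j * t w ≤ R₁ := fun w => (f3 w) ▸ le_bsup hv hψ' c w
  have b4 : ∀ w : UB E, A w - c j * t w ≤ R₂ := fun w => (f4 w) ▸ le_bsup hv hψ' c' w
  have key : ∀ w w' : UB E,
      (A w + c j * ψ j (t w)) + (A w' - c j * ψ j (t w')) ≤ R₁ + R₂ := by
    intro w w'
    have hlip : c j * ψ j (t w) - c j * ψ j (t w') ≤ |c j| * |t w - t w'| := by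
      calc c j * ψ j (t w) - c j * ψ j (t w') = c j * (ψ j (t w) - ψ j (t w')) := by ring
        _ ≤ |c j * (ψ j (t w) - ψ j (t w'))| := le_abs_self _
        _ = |c j| * |ψ j (t w) - ψ j (t w')| := abs_mul _ _
        _ ≤ |c j| * |t w - t w'| :=
            mul_le_mul_of_nonneg_left ((hψ j).2 _ _) (abs_nonneg _)
    rcases le_total (t w') (t w) with h | h
    · rw [abs_of_nonneg (sub_nonneg.2 h)] at hlip
      rcases abs_cases (c j) with ⟨he, _⟩ | ⟨he, _⟩
      · have := b3 w; have := b4 w'; nlinarith [hlip, he]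
      · have := b4 w; have := b3 w'; nlinarith [hlip, he]
    · rw [abs_sub_comm, abs_of_nonneg (sub_nonneg.2 h)] at hlip
      rcases abs_cases (c j) with ⟨he, _⟩ | ⟨he, _⟩
      · have := b4 w; have := b3 w'; nlinarith [hlip, he]
      · have := b3 w; have := b4 w'; nlinarith [hlip, he]
  have h1 : bsup v ψ c ≤ (R₁ + R₂) - bsup v ψ c' := by
    refine ciSup_le fun w => ?_
    rw [le_sub_iff_add_le, add_comm, ← le_sub_iff_add_le]
    refine ciSup_le fun w' => ?_
    rw [le_sub_iff_add_le, add_comm, f1 w, f2 w']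
    exact key w w'
  linarith

-- SIGN MACHINERY


def rsign (s : Fin n → Bool) : Fin n → ℝ := fun i => if s i then 1 else -1

def flipB (j : Fin n) (s : Fin n → Bool) : Fin n → Bool := Function.update s j (!(s j))

lemma flipB_invol (j : Fin n) : Function.Involutive (flipB j) := by
  intro s
  funext i
  rcases eq_or_ne i j with rfl | h
  · simp [flipB, Function.update_self]
  · simp [flipB, Function.update_of_ne h]

lemma rsign_flipB (j : Fin n) (s : Fin n → Bool) :
    rsign (flipB j s) = Function.update (rsign s) j (-(rsign s j)) := by
  funext i
  rcases eq_or_ne i j with rfl | h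
  · simp only [flipB, rsign, Function.update_self]
    cases s i <;> norm_num
  · simp [flipB, rsign, Function.update_of_ne h]

lemma sum_flipB (j : Fin n) (F : (Fin n → Bool) → ℝ) :
    ∑ s : Fin n → Bool, F (flipB j s) = ∑ s : Fin n → Bool, F s :=
  Function.Bijective.sum_comp (flipB_invol j).bijective F

lemma rad_orth {i i' : Fin n} (h : i ≠ i') :
    ∑ s : Fin n → Bool, rsign s i * rsign s i' = 0 := by
  have h2 := sum_flipB i (fun s => rsign s i * rsign s i')
  have h3 : ∀ s : Fin n → Bool, rsign (flipB i s) i * rsign (flipB i s) i'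
      = -(rsign s i * rsign s i') := by
    intro s
    rw [rsign_flipB]
    rw [Function.update_self, Function.update_of_ne h.symm]
    ring
  rw [Finset.sum_congr rfl (fun s _ => h3 s), Finset.sum_neg_distrib] at h2
  linarith

lemma rsign_sq (s : Fin n → Bool) (i : Fin n) : rsign s i * rsign s i = 1 := by
  simp only [rsign]; cases s i <;> norm_num

lemma card_signs : (Finset.univ : Finset (Fin n → Bool)).card = 2 ^ n := by
  simp [Finset.card_univ]

lemma rad_step (hv : ∀ i, ‖v i‖ ≤ Real.sqrt 2) {ψ : Fin n → ℝ → ℝ}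
    (hψ : ∀ i, Contr (ψ i)) (j : Fin n) :
    ∑ s : Fin n → Bool, bsup v ψ (rsign s) ≤
      ∑ s : Fin n → Bool, bsup v (Function.update ψ j id) (rsign s) := by
  set ψ' := Function.update ψ j id
  have pair : ∀ s : Fin n → Bool,
      bsup v ψ (rsign s) + bsup v ψ (rsign (flipB j s)) ≤
        bsup v ψ' (rsign s) + bsup v ψ' (rsign (flipB j s)) := by
    intro s
    rw [rsign_flipB]
    exact bsup_step hv hψ j (rsign s)
  have h2 : ∑ s : Fin n → Bool, (bsup v ψ (rsign s) + bsup v ψ (rsign (flipB j s))) ≤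
      ∑ s : Fin n → Bool, (bsup v ψ' (rsign s) + bsup v ψ' (rsign (flipB j s))) :=
    Finset.sum_le_sum fun s _ => pair s
  rw [Finset.sum_add_distrib, Finset.sum_add_distrib,
    sum_flipB j (fun s => bsup v ψ (rsign s)), sum_flipB j (fun s => bsup v ψ' (rsign s))] at h2
  linarith

lemma rad_contraction (hv : ∀ i, ‖v i‖ ≤ Real.sqrt 2) {φ : ℝ → ℝ} (hφ : Contr φ) :
    ∑ s : Fin n → Bool, bsup v (fun _ => φ) (rsign s) ≤
      ∑ s : Fin n → Bool, bsup v (fun _ => (id : ℝ → ℝ)) (rsign s) := by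
  classical
  set ψK : Finset (Fin n) → Fin n → ℝ → ℝ :=
    fun K i => if i ∈ K then (id : ℝ → ℝ) else φ with hψK
  have hcontr : ∀ K i, Contr (ψK K i) := by
    intro K i
    by_cases h : i ∈ K <;> simp [hψK, h, contr_id, hφ]
  have key : ∀ K : Finset (Fin n),
      ∑ s : Fin n → Bool, bsup v (ψK ∅) (rsign s) ≤
        ∑ s : Fin n → Bool, bsup v (ψK K) (rsign s) := by
    intro K
    induction K using Finset.induction_on with
    | empty => exact le_refl _
    | @insert j K hjK ih =>
        refine le_trans ih ?_
        have hupd : ψK (insert j K) = Function.update (ψK K) j id := by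
          funext i
          rcases eq_or_ne i j with rfl | h
          · simp [hψK, Function.update_self]
          · simp [hψK, Function.update_of_ne h, Finset.mem_insert, h]
        rw [hupd]
        exact rad_step hv (hcontr K) j
  have h0 : ψK ∅ = fun _ => φ := by funext i; simp [hψK]
  have h1 : ψK Finset.univ = fun _ => (id : ℝ → ℝ) := by funext i; simp [hψK]
  have := key Finset.univ
  rwa [h0, h1] at this

lemma bsup_id_le (c : Fin n → ℝ) :
    bsup v (fun _ => (id : ℝ → ℝ)) c ≤ ‖∑ i, c i • v i‖ := by
  refine bsup_le fun w => ?_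
  have hrw : ∑ i, c i * (id : ℝ → ℝ) ⟪(w : E), v i⟫ = ⟪(w : E), ∑ i, c i • v i⟫ := by
    rw [inner_sum]
    simp [real_inner_smul_right]
  rw [hrw]
  calc ⟪(w : E), ∑ i, c i • v i⟫ ≤ ‖(w : E)‖ * ‖∑ i, c i • v i‖ := real_inner_le_norm _ _
    _ ≤ 1 * ‖∑ i, c i • v i‖ := mul_le_mul_of_nonneg_right w.2 (norm_nonneg _)
    _ = _ := one_mul _

lemma normsq_expand (c : Fin n → ℝ) :
    ‖∑ i, c i • v i‖ ^ 2 = ∑ i, ∑ i', c i * c i' * ⟪v i, v i'⟫ := by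
  rw [← real_inner_self_eq_norm_sq, sum_inner]
  refine Finset.sum_congr rfl fun i _ => ?_
  rw [real_inner_smul_left, inner_sum, Finset.mul_sum]
  refine Finset.sum_congr rfl fun i' _ => ?_
  rw [real_inner_smul_right]
  ring

lemma rad_sq (hv : ∀ i, ‖v i‖ ≤ Real.sqrt 2) :
    ∑ s : Fin n → Bool, ‖∑ i, rsign s i • v i‖ ^ 2 ≤ 2 ^ n * (2 * n) := by
  calc ∑ s : Fin n → Bool, ‖∑ i, rsign s i • v i‖ ^ 2
      = ∑ i, ∑ i', (∑ s : Fin n → Bool, rsign s i * rsign s i') * ⟪v i, v i'⟫ := by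
        rw [Finset.sum_congr rfl (fun s _ => normsq_expand (v := v) (rsign s)),
          Finset.sum_comm]
        refine Finset.sum_congr rfl fun i _ => ?_
        rw [Finset.sum_comm]
        refine Finset.sum_congr rfl fun i' _ => ?_
        rw [← Finset.sum_mul]
    _ = ∑ i : Fin n, (2 ^ n : ℝ) * ‖v i‖ ^ 2 := by
        refine Finset.sum_congr rfl fun i _ => ?_
        rw [Finset.sum_eq_single i]
        · rw [Finset.sum_congr rfl (fun s _ => rsign_sq s i), Finset.sum_const, card_signs,
            real_inner_self_eq_norm_sq]
          simp
        · intro i' _ hne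
          rw [rad_orth (Ne.symm hne), zero_mul]
        · intro h; exact absurd (Finset.mem_univ i) h
    _ ≤ ∑ _i : Fin n, (2 ^ n : ℝ) * 2 := by
        refine Finset.sum_le_sum fun i _ => ?_
        refine mul_le_mul_of_nonneg_left ?_ (by positivity)
        calc ‖v i‖ ^ 2 ≤ Real.sqrt 2 ^ 2 := by
              exact pow_le_pow_left₀ (norm_nonneg _) (hv i) 2
          _ = 2 := Real.sq_sqrt (by norm_num)
    _ = 2 ^ n * (2 * n) := by
        rw [Finset.sum_const, Finset.card_univ, Fintype.card_fin, nsmul_eq_mul]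
        ring

lemma rad_total (hv : ∀ i, ‖v i‖ ≤ Real.sqrt 2) :
    ∑ s : Fin n → Bool, ‖∑ i, rsign s i • v i‖ ≤ 2 ^ n * Real.sqrt (32 * n) := by
  rcases Nat.eq_zero_or_pos n with rfl | hn
  · simp
  set a := Real.sqrt (32 * n) with hadef
  have hn' : (0 : ℝ) < n := by exact_mod_cast hn
  have ha : 0 < a := Real.sqrt_pos.2 (by positivity)
  have ha2 : a ^ 2 = 32 * n := Real.sq_sqrt (by positivity)
  have hpt : ∀ s : Fin n → Bool, ‖∑ i, rsign s i • v i‖ ≤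
      ‖∑ i, rsign s i • v i‖ ^ 2 / (2 * a) + a / 2 := by
    intro s
    set t := ‖∑ i, rsign s i • v i‖ with htdef
    have h2 : 2 * a * t ≤ t ^ 2 + a ^ 2 := by nlinarith [sq_nonneg (t - a)]
    calc t = (2 * a * t) / (2 * a) := by field_simp
      _ ≤ (t ^ 2 + a ^ 2) / (2 * a) := by
          exact div_le_div_of_nonneg_right h2 (by positivity) |>.trans_eq rfl
      _ = t ^ 2 / (2 * a) + a / 2 := by field_simp
  calc ∑ s : Fin n → Bool, ‖∑ i, rsign s i • v i‖
      ≤ ∑ s : Fin n → Bool, (‖∑ i, rsign s i • v i‖ ^ 2 / (2 * a) + a / 2) :=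
        Finset.sum_le_sum fun s _ => hpt s
    _ = (∑ s : Fin n → Bool, ‖∑ i, rsign s i • v i‖ ^ 2) / (2 * a) + 2 ^ n * (a / 2) := by
        rw [Finset.sum_add_distrib, ← Finset.sum_div, Finset.sum_const, card_signs,
          nsmul_eq_mul]
        norm_num
    _ ≤ (2 ^ n * (2 * n)) / (2 * a) + 2 ^ n * (a / 2) := by
        have := rad_sq (v := v) hv
        gcongr
    _ ≤ 2 ^ n * a := by
        have hp : (0:ℝ) < 2 ^ n := by positivity
        have hdiv : (2 ^ n * (2 * n)) / (2 * a) ≤ 2 ^ n * (a / 2) := by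
          rw [div_le_iff₀ (by positivity)]
          nlinarith [ha2, hp]
        linarith

-- GAUSSIAN SCALAR FACTS

lemma pdf_bound : ∀ x : ℝ, gaussianPDFReal 0 1 x * x ^ 2 ≤ 4 * rexp (-(1/4) * x ^ 2) := by
  intro x
  have hpdf : gaussianPDFReal 0 1 x ≤ rexp (-x ^ 2 / 2) := by
    rw [gaussianPDFReal]
    have h1 : (1 : ℝ) ≤ Real.sqrt (2 * π * (1 : NNReal)) := by
      rw [show ((1 : NNReal) : ℝ) = 1 by norm_num, mul_one]
      rw [show (1:ℝ) = Real.sqrt 1 by simp]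
      exact Real.sqrt_le_sqrt (by nlinarith [Real.pi_gt_three])
    have h2 : (Real.sqrt (2 * π * (1 : NNReal)))⁻¹ ≤ 1 := by
      rw [inv_le_one_iff₀]; right; exact h1
    calc (√(2 * π * (1 : NNReal)))⁻¹ * rexp (-(x - 0) ^ 2 / (2 * (1 : NNReal)))
        ≤ 1 * rexp (-(x - 0) ^ 2 / (2 * (1 : NNReal))) := by
          exact mul_le_mul_of_nonneg_right h2 (Real.exp_nonneg _)
      _ = rexp (-x ^ 2 / 2) := by norm_num
  have hx2 : x ^ 2 ≤ 4 * rexp (x ^ 2 / 4) := by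
    have := Real.add_one_le_exp (x ^ 2 / 4)
    nlinarith [sq_nonneg x, Real.exp_nonneg (x ^ 2 / 4)]
  have hpos : 0 ≤ gaussianPDFReal 0 1 x := gaussianPDFReal_nonneg _ _ _
  calc gaussianPDFReal 0 1 x * x ^ 2 ≤ rexp (-x ^ 2 / 2) * (4 * rexp (x ^ 2 / 4)) := by
        refine mul_le_mul hpdf hx2 (sq_nonneg _) (Real.exp_nonneg _)
    _ = 4 * (rexp (-x ^ 2 / 2) * rexp (x ^ 2 / 4)) := by ring
    _ = 4 * rexp (-(1/4) * x ^ 2) := by rw [← Real.exp_add]; ring_nf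

lemma int_majorant : Integrable (fun x : ℝ => 4 * rexp (-(1/4) * x ^ 2)) :=
  (integrable_exp_neg_mul_sq (by norm_num : (0:ℝ) < 1/4)).const_mul 4

lemma int_pdf_sq : Integrable (fun x : ℝ => gaussianPDFReal 0 1 x * x ^ 2) := by
  refine Integrable.mono' int_majorant ?_ ?_
  · exact ((measurable_gaussianPDFReal 0 1).mul (measurable_id.pow_const 2)).aestronglyMeasurable
  · refine Filter.Eventually.of_forall fun x => ?_
    rw [Real.norm_eq_abs,
      abs_of_nonneg (mul_nonneg (gaussianPDFReal_nonneg 0 1 x) (sq_nonneg x))]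
    exact pdf_bound x

lemma gaussianReal_eq : gaussianReal 0 1 =
    MeasureTheory.Measure.withDensity volume
      (fun x => ((gaussianPDFReal 0 1 x).toNNReal : ENNReal)) := by
  rw [gaussianReal_of_var_ne_zero 0 one_ne_zero]
  rfl

lemma gauss_int_sq : Integrable (fun x : ℝ => x ^ 2) (gaussianReal 0 1) := by
  rw [gaussianReal_eq]
  rw [integrable_withDensity_iff ((measurable_gaussianPDFReal 0 1).real_toNNReal.coe_nnreal_ennreal)
    (Filter.Eventually.of_forall fun x => ENNReal.coe_lt_top)]
  refine int_pdf_sq.congr (Filter.Eventually.of_forall fun x => ?_)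
  simp [Real.coe_toNNReal _ (gaussianPDFReal_nonneg 0 1 x), mul_comm]

lemma gauss_sq_le : ∫ x, x ^ 2 ∂(gaussianReal 0 1) ≤ 16 := by
  rw [gaussianReal_eq, integral_withDensity_eq_integral_smul
    (measurable_gaussianPDFReal 0 1).real_toNNReal]
  have h1 : ∫ x : ℝ, (gaussianPDFReal 0 1 x).toNNReal • x ^ 2
      = ∫ x : ℝ, gaussianPDFReal 0 1 x * x ^ 2 := by
    refine integral_congr_ae (Filter.Eventually.of_forall fun x => ?_)
    simp [NNReal.smul_def, Real.coe_toNNReal _ (gaussianPDFReal_nonneg 0 1 x)]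
  rw [h1]
  calc ∫ x : ℝ, gaussianPDFReal 0 1 x * x ^ 2
      ≤ ∫ x : ℝ, 4 * rexp (-(1/4) * x ^ 2) := by
        exact integral_mono int_pdf_sq int_majorant pdf_bound
    _ = 4 * ∫ x : ℝ, rexp (-(1/4) * x ^ 2) := integral_const_mul 4 _
    _ = 4 * Real.sqrt (π / (1/4)) := by rw [integral_gaussian]
    _ ≤ 16 := by
        have h4 : Real.sqrt (π / (1/4)) ≤ Real.sqrt 16 :=
          Real.sqrt_le_sqrt (by nlinarith [Real.pi_le_four])
        have h5 : Real.sqrt 16 = 4 := by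
          rw [show (16:ℝ) = 4 ^ 2 by norm_num, Real.sqrt_sq]; norm_num
        linarith

lemma gauss_int_abs : Integrable (fun x : ℝ => |x|) (gaussianReal 0 1) := by
  refine Integrable.mono' (gauss_int_sq.add (integrable_const 1)) ?_ ?_
  · exact (measurable_abs).aestronglyMeasurable
  · refine Filter.Eventually.of_forall fun x => ?_
    rw [Real.norm_eq_abs, abs_abs]
    simp only [Pi.add_apply]
    nlinarith [sq_nonneg (|x| - 1), sq_abs x]

lemma gauss_map_neg : Measure.map (fun x : ℝ => -x) (gaussianReal 0 1) = gaussianReal 0 1 := by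
  have := gaussianReal_map_const_mul (μ := 0) (v := 1) (-1)
  simp only [neg_one_mul, mul_zero] at this
  rw [this]
  norm_num

-- PI MEASURE MACHINERY


local notation "γn" => Measure.pi (fun _ : Fin n => gaussianReal 0 1)


lemma map_eval (j : Fin n) :
    (γn).map (fun ε => ε j) = gaussianReal 0 1 := by
  ext s hs
  rw [Measure.map_apply (measurable_pi_apply j) hs]
  have hpre : (fun ε : Fin n → ℝ => ε j) ⁻¹' s =
      Set.pi Set.univ (Function.update (fun _ : Fin n => (Set.univ : Set ℝ)) j s) := by
    ext ε
    simp only [Set.mem_preimage, Set.mem_pi, Set.mem_univ, forall_true_left]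
    constructor
    · intro h i
      rcases eq_or_ne i j with rfl | hij
      · rwa [Function.update_self]
      · rw [Function.update_of_ne hij]; trivial
    · intro h
      have := h j
      rwa [Function.update_self] at this
  rw [hpre, Measure.pi_pi]
  rw [Finset.prod_eq_single j]
  · rw [Function.update_self]
  · intro i _ hij
    rw [Function.update_of_ne hij]
    simp
  · intro h; exact absurd (Finset.mem_univ j) h

lemma mp_eval (j : Fin n) :
    MeasurePreserving (fun ε : Fin n → ℝ => ε j) γn (gaussianReal 0 1) :=
  ⟨measurable_pi_apply j, map_eval j⟩

lemma int_eval {w : ℝ → ℝ} (hw : Integrable w (gaussianReal 0 1)) (j : Fin n) :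
    Integrable (fun ε : Fin n → ℝ => w (ε j)) γn :=
  ((mp_eval j).integrable_comp hw.aestronglyMeasurable).2 hw

lemma integral_eval {w : ℝ → ℝ} (hw : AEStronglyMeasurable w (gaussianReal 0 1)) (j : Fin n) :
    ∫ ε, w (ε j) ∂γn = ∫ x, w x ∂(gaussianReal 0 1) := by
  conv_rhs => rw [← map_eval j]
  rw [integral_map (measurable_pi_apply j).aemeasurable]
  rw [map_eval (n := n) j]
  exact hw

/-- flip of coordinate `j` -/
def flipG (j : Fin n) (ε : Fin n → ℝ) : Fin n → ℝ := Function.update ε j (-(ε j))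

lemma measurable_flipG (j : Fin n) : Measurable (flipG (n := n) j) := by
  refine measurable_pi_lambda _ fun i => ?_
  rcases eq_or_ne i j with rfl | hij
  · simp only [flipG, Function.update_self]
    exact (measurable_pi_apply i).neg
  · simp only [flipG, Function.update_of_ne hij]
    exact measurable_pi_apply i

lemma mp_flipG (j : Fin n) : MeasurePreserving (flipG (n := n) j) γn γn := by
  refine ⟨measurable_flipG j, ?_⟩
  refine (Measure.pi_eq fun s hs => ?_).symm
  rw [Measure.map_apply (measurable_flipG j) (MeasurableSet.univ_pi hs)]
  have hpre : flipG (n := n) j ⁻¹' Set.pi Set.univ s =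
      Set.pi Set.univ (Function.update s j ((fun x : ℝ => -x) ⁻¹' s j)) := by
    ext ε
    simp only [Set.mem_preimage, Set.mem_pi, Set.mem_univ, forall_true_left]
    constructor
    · intro h i
      rcases eq_or_ne i j with rfl | hij
      · rw [Function.update_self]
        have := h i
        rwa [flipG, Function.update_self] at this
      · rw [Function.update_of_ne hij]
        have := h i
        rwa [flipG, Function.update_of_ne hij] at this
    · intro h i
      rcases eq_or_ne i j with rfl | hij
      · rw [flipG, Function.update_self]
        have := h i
        rwa [Function.update_self] at this
      · rw [flipG, Function.update_of_ne hij]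
        have := h i
        rwa [Function.update_of_ne hij] at this
  rw [hpre, Measure.pi_pi]
  refine Finset.prod_congr rfl fun i _ => ?_
  rcases eq_or_ne i j with rfl | hij
  · rw [Function.update_self]
    have h5 : (gaussianReal 0 1) ((fun x : ℝ => -x) ⁻¹' s i) =
        (Measure.map (fun x : ℝ => -x) (gaussianReal 0 1)) (s i) :=
      (Measure.map_apply measurable_neg (hs i)).symm
    rw [h5, gauss_map_neg]
  · rw [Function.update_of_ne hij]

lemma integral_flipG (j : Fin n) {g : (Fin n → ℝ) → ℝ} (hg : AEStronglyMeasurable g γn) :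
    ∫ ε, g ε ∂γn = ∫ ε, g (flipG j ε) ∂γn := by
  conv_lhs => rw [← (mp_flipG j).map_eq]
  rw [integral_map (measurable_flipG j).aemeasurable]
  rw [(mp_flipG j).map_eq]
  exact hg

lemma int_mul_eval (i i' : Fin n) :
    Integrable (fun ε : Fin n → ℝ => ε i * ε i') γn := by
  refine Integrable.mono' ((int_eval gauss_int_sq i).add (int_eval gauss_int_sq i')) ?_ ?_
  · exact ((measurable_pi_apply i).mul (measurable_pi_apply i')).aestronglyMeasurable
  · refine Filter.Eventually.of_forall fun ε => ?_
    rw [Real.norm_eq_abs, abs_mul]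
    simp only [Pi.add_apply]
    nlinarith [sq_nonneg (|ε i| - |ε i'|), sq_abs (ε i), sq_abs (ε i')]

lemma gauss_cross (i i' : Fin n) (h : i ≠ i') :
    ∫ ε, ε i * ε i' ∂γn = 0 := by
  have hmeas : AEStronglyMeasurable (fun ε : Fin n → ℝ => ε i * ε i') γn :=
    ((measurable_pi_apply i).mul (measurable_pi_apply i')).aestronglyMeasurable
  have h2 := integral_flipG i hmeas
  have h3 : ∀ ε : Fin n → ℝ, (flipG i ε) i * (flipG i ε) i' = -(ε i * ε i') := by
    intro ε
    rw [flipG, Function.update_self, Function.update_of_ne (Ne.symm h)]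
    ring
  rw [integral_congr_ae (Filter.Eventually.of_forall fun ε => h3 ε), integral_neg] at h2
  linarith

lemma gauss_diag (i : Fin n) : ∫ ε, ε i * ε i ∂γn ≤ 16 := by
  have : ∀ ε : Fin n → ℝ, ε i * ε i = (fun x : ℝ => x ^ 2) (ε i) := fun ε => (sq (ε i)).symm
  rw [integral_congr_ae (Filter.Eventually.of_forall this)]
  rw [show (fun ε : Fin n → ℝ => (fun x : ℝ => x ^ 2) (ε i)) = fun ε : Fin n → ℝ => (ε i) ^ 2
    from rfl]
  have := integral_eval (n := n) (w := fun x : ℝ => x ^ 2) (by fun_prop) i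
  rw [this]
  exact gauss_sq_le

lemma gauss_diag_nonneg (i : Fin n) : 0 ≤ ∫ ε, ε i * ε i ∂γn :=
  integral_nonneg fun ε => mul_self_nonneg _

-- GAUSSIAN CONTRACTION
lemma bsup_lip (hv : ∀ i, ‖v i‖ ≤ Real.sqrt 2) {ψ : Fin n → ℝ → ℝ}
    (hψ : ∀ i, Contr (ψ i)) (c c' : Fin n → ℝ) :
    bsup v ψ c ≤ bsup v ψ c' + Real.sqrt 2 * ∑ i, |c i - c' i| := by
  refine bsup_le fun w => ?_
  have hsplit : ∑ i, c i * ψ i ⟪(w : E), v i⟫ =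
      ∑ i, c' i * ψ i ⟪(w : E), v i⟫ + ∑ i, (c i - c' i) * ψ i ⟪(w : E), v i⟫ := by
    rw [← Finset.sum_add_distrib]
    exact Finset.sum_congr rfl fun i _ => by ring
  rw [hsplit]
  exact add_le_add (le_bsup hv hψ c' w)
    (le_of_abs_le (elt_bound hv hψ (fun i => c i - c' i) w))

lemma bsup_abs_sub (hv : ∀ i, ‖v i‖ ≤ Real.sqrt 2) {ψ : Fin n → ℝ → ℝ}
    (hψ : ∀ i, Contr (ψ i)) (c c' : Fin n → ℝ) :
    |bsup v ψ c - bsup v ψ c'| ≤ Real.sqrt 2 * ∑ i, |c i - c' i| := by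
  rw [abs_sub_le_iff]
  constructor
  · have := bsup_lip hv hψ c c'
    linarith
  · have := bsup_lip hv hψ c' c
    have hsym : ∑ i, |c' i - c i| = ∑ i, |c i - c' i| :=
      Finset.sum_congr rfl fun i _ => abs_sub_comm _ _
    rw [hsym] at this
    linarith

lemma bsup_cont (hv : ∀ i, ‖v i‖ ≤ Real.sqrt 2) {ψ : Fin n → ℝ → ℝ}
    (hψ : ∀ i, Contr (ψ i)) : Continuous (fun c : Fin n → ℝ => bsup v ψ c) := by
  refine LipschitzWith.continuous
    (K := Real.toNNReal (Real.sqrt 2 * n)) (LipschitzWith.of_dist_le_mul fun c c' => ?_)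
  rw [Real.dist_eq, Real.coe_toNNReal _ (by positivity)]
  refine le_trans (bsup_abs_sub hv hψ c c') ?_
  have h1 : ∑ i, |c i - c' i| ≤ ∑ _i : Fin n, dist c c' := by
    refine Finset.sum_le_sum fun i _ => ?_
    rw [← Real.dist_eq]
    exact dist_le_pi_dist c c' i
  rw [Finset.sum_const, Finset.card_univ, Fintype.card_fin, nsmul_eq_mul] at h1
  calc Real.sqrt 2 * ∑ i, |c i - c' i| ≤ Real.sqrt 2 * (n * dist c c') := by
        exact mul_le_mul_of_nonneg_left h1 (Real.sqrt_nonneg 2)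
    _ = Real.sqrt 2 * n * dist c c' := by ring

lemma int_abs_sum : Integrable (fun ε : Fin n → ℝ => Real.sqrt 2 * ∑ i, |ε i|) γn := by
  refine Integrable.const_mul ?_ _
  refine integrable_finset_sum _ fun i _ => ?_
  exact int_eval gauss_int_abs i

lemma bsup_integrable (hv : ∀ i, ‖v i‖ ≤ Real.sqrt 2) {ψ : Fin n → ℝ → ℝ}
    (hψ : ∀ i, Contr (ψ i)) : Integrable (fun ε : Fin n → ℝ => bsup v ψ ε) γn := by
  refine Integrable.mono' int_abs_sum (bsup_cont hv hψ).aestronglyMeasurable ?_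
  refine Filter.Eventually.of_forall fun ε => ?_
  rw [Real.norm_eq_abs]
  exact bsup_abs_le hv hψ ε

lemma gauss_step (hv : ∀ i, ‖v i‖ ≤ Real.sqrt 2) {ψ : Fin n → ℝ → ℝ}
    (hψ : ∀ i, Contr (ψ i)) (j : Fin n) :
    ∫ ε, bsup v ψ ε ∂γn ≤ ∫ ε, bsup v (Function.update ψ j id) ε ∂γn := by
  set ψ' := Function.update ψ j id with hψ'def
  have hψ' : ∀ i, Contr (ψ' i) := contr_update hψ j
  have hint : Integrable (fun ε : Fin n → ℝ => bsup v ψ ε) γn := bsup_integrable hv hψ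
  have hint' : Integrable (fun ε : Fin n → ℝ => bsup v ψ' ε) γn := bsup_integrable hv hψ'
  have hintf : Integrable (fun ε : Fin n → ℝ => bsup v ψ (flipG j ε)) γn := by
    have := ((mp_flipG j).integrable_comp hint.aestronglyMeasurable).2 hint
    simpa [Function.comp_def] using this
  have hintf' : Integrable (fun ε : Fin n → ℝ => bsup v ψ' (flipG j ε)) γn := by
    have := ((mp_flipG j).integrable_comp hint'.aestronglyMeasurable).2 hint'
    simpa [Function.comp_def] using this
  have hflip : ∫ ε, bsup v ψ ε ∂γn = ∫ ε, bsup v ψ (flipG j ε) ∂γn :=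
    integral_flipG j hint.aestronglyMeasurable
  have hflip' : ∫ ε, bsup v ψ' ε ∂γn = ∫ ε, bsup v ψ' (flipG j ε) ∂γn :=
    integral_flipG j hint'.aestronglyMeasurable
  have pair : ∀ ε : Fin n → ℝ, bsup v ψ ε + bsup v ψ (flipG j ε) ≤
      bsup v ψ' ε + bsup v ψ' (flipG j ε) := fun ε => bsup_step hv hψ j ε
  have h1 : ∫ ε, (bsup v ψ ε + bsup v ψ (flipG j ε)) ∂γn ≤
      ∫ ε, (bsup v ψ' ε + bsup v ψ' (flipG j ε)) ∂γn :=
    integral_mono (hint.add hintf) (hint'.add hintf') pair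
  rw [integral_add hint hintf, integral_add hint' hintf', ← hflip, ← hflip'] at h1
  linarith

lemma gauss_contraction (hv : ∀ i, ‖v i‖ ≤ Real.sqrt 2) {φ : ℝ → ℝ} (hφ : Contr φ) :
    ∫ ε, bsup v (fun _ => φ) ε ∂γn ≤ ∫ ε, bsup v (fun _ => (id : ℝ → ℝ)) ε ∂γn := by
  classical
  set ψK : Finset (Fin n) → Fin n → ℝ → ℝ :=
    fun K i => if i ∈ K then (id : ℝ → ℝ) else φ with hψK
  have hcontr : ∀ K i, Contr (ψK K i) := by
    intro K i
    by_cases h : i ∈ K <;> simp [hψK, h, contr_id, hφ]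
  have key : ∀ K : Finset (Fin n),
      ∫ ε, bsup v (ψK ∅) ε ∂γn ≤ ∫ ε, bsup v (ψK K) ε ∂γn := by
    intro K
    induction K using Finset.induction_on with
    | empty => exact le_refl _
    | @insert j K hjK ih =>
        refine le_trans ih ?_
        have hupd : ψK (insert j K) = Function.update (ψK K) j id := by
          funext i
          rcases eq_or_ne i j with rfl | h
          · simp [hψK, Function.update_self]
          · simp [hψK, Function.update_of_ne h, Finset.mem_insert, h]
        rw [hupd]
        exact gauss_step hv (hcontr K) j
  have h0 : ψK ∅ = fun _ => φ := by funext i; simp [hψK]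
  have h1 : ψK Finset.univ = fun _ => (id : ℝ → ℝ) := by funext i; simp [hψK]
  have := key Finset.univ
  rwa [h0, h1] at this

lemma Vcont : Continuous (fun ε : Fin n → ℝ => ∑ i, ε i • v i) := by
  refine continuous_finset_sum _ fun i _ => ?_
  exact (continuous_apply i).smul continuous_const

lemma Vnorm_int (hv : ∀ i, ‖v i‖ ≤ Real.sqrt 2) :
    Integrable (fun ε : Fin n → ℝ => ‖∑ i, ε i • v i‖) γn := by
  refine Integrable.mono' int_abs_sum (Vcont (v := v)).norm.aestronglyMeasurable ?_
  refine Filter.Eventually.of_forall fun ε => ?_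
  rw [Real.norm_eq_abs, abs_norm]
  calc ‖∑ i, ε i • v i‖ ≤ ∑ i, ‖ε i • v i‖ := norm_sum_le _ _
    _ ≤ ∑ i, Real.sqrt 2 * |ε i| := by
        refine Finset.sum_le_sum fun i _ => ?_
        rw [norm_smul, Real.norm_eq_abs]
        calc |ε i| * ‖v i‖ ≤ |ε i| * Real.sqrt 2 :=
              mul_le_mul_of_nonneg_left (hv i) (abs_nonneg _)
          _ = Real.sqrt 2 * |ε i| := mul_comm _ _
    _ = Real.sqrt 2 * ∑ i, |ε i| := by rw [Finset.mul_sum]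

lemma Vnormsq_int (hv : ∀ i, ‖v i‖ ≤ Real.sqrt 2) :
    Integrable (fun ε : Fin n → ℝ => ‖∑ i, ε i • v i‖ ^ 2) γn := by
  have : ∀ ε : Fin n → ℝ, ‖∑ i, ε i • v i‖ ^ 2 =
      ∑ i, ∑ i', ε i * ε i' * ⟪v i, v i'⟫ := fun ε => normsq_expand _
  refine Integrable.congr ?_ (Filter.Eventually.of_forall fun ε => (this ε).symm)
  refine integrable_finset_sum _ fun i _ => ?_
  refine integrable_finset_sum _ fun i' _ => ?_
  exact (int_mul_eval i i').mul_const _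

lemma Vnormsq_integral (hv : ∀ i, ‖v i‖ ≤ Real.sqrt 2) :
    ∫ ε, ‖∑ i, ε i • v i‖ ^ 2 ∂γn ≤ 32 * n := by
  have hcongr : ∫ ε, ‖∑ i, ε i • v i‖ ^ 2 ∂γn =
      ∫ ε, ∑ i, ∑ i', ε i * ε i' * ⟪v i, v i'⟫ ∂γn :=
    integral_congr_ae (Filter.Eventually.of_forall fun ε => normsq_expand _)
  rw [hcongr, integral_finset_sum _ fun i _ =>
    integrable_finset_sum _ fun i' _ => (int_mul_eval i i').mul_const _]
  have hinner : ∀ i : Fin n, ∫ ε, ∑ i', ε i * ε i' * ⟪v i, v i'⟫ ∂γn ≤ 32 := by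
    intro i
    rw [integral_finset_sum _ fun i' _ => (int_mul_eval i i').mul_const _]
    have hterm : ∀ i' : Fin n, ∫ ε, ε i * ε i' * ⟪v i, v i'⟫ ∂γn =
        (∫ ε, ε i * ε i' ∂γn) * ⟪v i, v i'⟫ := fun i' => integral_mul_const _ _
    rw [Finset.sum_congr rfl fun i' _ => hterm i', Finset.sum_eq_single i]
    · have h2 : ⟪v i, v i⟫ ≤ 2 := by
        rw [real_inner_self_eq_norm_sq]
        calc ‖v i‖ ^ 2 ≤ Real.sqrt 2 ^ 2 := pow_le_pow_left₀ (norm_nonneg _) (hv i) 2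
          _ = 2 := Real.sq_sqrt (by norm_num)
      have h3 : 0 ≤ ⟪v i, v i⟫ := real_inner_self_nonneg
      calc (∫ ε, ε i * ε i ∂γn) * ⟪v i, v i⟫ ≤ 16 * 2 :=
            mul_le_mul (gauss_diag i) h2 h3 (by norm_num)
        _ = 32 := by norm_num
    · intro i' _ hne
      rw [gauss_cross i i' (Ne.symm hne), zero_mul]
    · intro h; exact absurd (Finset.mem_univ i) h
  calc ∑ i : Fin n, ∫ ε, ∑ i', ε i * ε i' * ⟪v i, v i'⟫ ∂γn ≤ ∑ _i : Fin n, (32 : ℝ) :=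
        Finset.sum_le_sum fun i _ => hinner i
    _ = 32 * n := by
        rw [Finset.sum_const, Finset.card_univ, Fintype.card_fin, nsmul_eq_mul]; ring

lemma gauss_total (hv : ∀ i, ‖v i‖ ≤ Real.sqrt 2) :
    ∫ ε, bsup v (fun _ => (id : ℝ → ℝ)) ε ∂γn ≤ Real.sqrt (32 * n) := by
  have hid : ∀ i : Fin n, Contr ((fun _ => (id : ℝ → ℝ)) i) := fun _ => contr_id
  have step1 : ∫ ε, bsup v (fun _ => (id : ℝ → ℝ)) ε ∂γn ≤ ∫ ε, ‖∑ i, ε i • v i‖ ∂γn :=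
    integral_mono (bsup_integrable hv hid) (Vnorm_int hv) fun ε => bsup_id_le ε
  rcases Nat.eq_zero_or_pos n with rfl | hn
  · refine le_trans step1 ?_
    have : ∀ ε : Fin 0 → ℝ, ‖∑ i, ε i • v i‖ = 0 := by intro ε; simp
    rw [integral_congr_ae (Filter.Eventually.of_forall this)]
    simp
  set a := Real.sqrt (32 * n) with hadef
  have hn' : (0 : ℝ) < n := by exact_mod_cast hn
  have ha : 0 < a := Real.sqrt_pos.2 (by positivity)
  have ha2 : a ^ 2 = 32 * n := Real.sq_sqrt (by positivity)
  have hpt : ∀ ε : Fin n → ℝ, ‖∑ i, ε i • v i‖ ≤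
      ‖∑ i, ε i • v i‖ ^ 2 / (2 * a) + a / 2 := by
    intro ε
    set t := ‖∑ i, ε i • v i‖ with htdef
    have h2 : 2 * a * t ≤ t ^ 2 + a ^ 2 := by nlinarith [sq_nonneg (t - a)]
    calc t = (2 * a * t) / (2 * a) := by field_simp
      _ ≤ (t ^ 2 + a ^ 2) / (2 * a) := div_le_div_of_nonneg_right h2 (by positivity)
      _ = t ^ 2 / (2 * a) + a / 2 := by field_simp
  have step2 : ∫ ε, ‖∑ i, ε i • v i‖ ∂γn ≤
      ∫ ε, (‖∑ i, ε i • v i‖ ^ 2 / (2 * a) + a / 2) ∂γn :=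
    integral_mono (Vnorm_int hv) (((Vnormsq_int hv).div_const _).add (integrable_const _)) hpt
  have step3 : ∫ ε, (‖∑ i, ε i • v i‖ ^ 2 / (2 * a) + a / 2) ∂γn ≤ a := by
    rw [integral_add ((Vnormsq_int hv).div_const _) (integrable_const _), integral_const]
    have hUniv : (Measure.pi fun _ : Fin n => gaussianReal 0 1) Set.univ = 1 := measure_univ
    rw [integral_div]
    have h4 : ∫ ε, ‖∑ i, ε i • v i‖ ^ 2 ∂γn ≤ 32 * n := Vnormsq_integral hv
    have h5 : (∫ ε, ‖∑ i, ε i • v i‖ ^ 2 ∂γn) / (2 * a) ≤ (32 * n) / (2 * a) :=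
      div_le_div_of_nonneg_right h4 (by positivity) |>.trans_eq rfl
    have h6 : (32 * (n : ℝ)) / (2 * a) ≤ a / 2 := by
      rw [div_le_iff₀ (by positivity)]
      nlinarith [ha2]
    have h7 : (Measure.pi fun _ : Fin n => gaussianReal 0 1).real Set.univ • (a / 2) = a / 2 := by
      simp
    rw [h7]
    linarith
  exact le_trans step1 (le_trans step2 step3)

end Prop1Aux

-- CONCRETE GLUE
section Glue

open Real

local notation "⟪" x ", " y "⟫" => @inner ℝ _ _ x y

variable {d : ℕ}

abbrev E2 (d : ℕ) := WithLp 2 (EuclideanSpace ℝ (Fin d) × ℝ)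

noncomputable def mkE2 (θ : Euc d) (b : ℝ) : E2 d := (WithLp.equiv 2 _).symm (θ, b)

lemma mkE2_norm (θ : Euc d) (b : ℝ) : ‖mkE2 θ b‖ = Real.sqrt (‖θ‖ ^ 2 + b ^ 2) := by
  rw [mkE2, WithLp.prod_norm_eq_of_L2, WithLp.equiv_symm_apply, WithLp.toLp_fst, WithLp.toLp_snd]
  simp [Real.norm_eq_abs, sq_abs]

lemma mkE2_inner (θ : Euc d) (b : ℝ) (x : Euc d) (c : ℝ) :
    ⟪mkE2 θ b, mkE2 x c⟫ = (∑ l, θ l * x l) + b * c := by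
  rw [mkE2, mkE2, WithLp.prod_inner_apply, WithLp.equiv_symm_apply, WithLp.ofLp_toLp,
    WithLp.ofLp_toLp]
  simp [PiLp.inner_apply, RCLike.inner_apply, conj_trivial, mul_comm]

noncomputable def φp : ℝ → ℝ := fun t => max t 0
noncomputable def φm : ℝ → ℝ := fun t => -max t 0

lemma contr_φp : Contr φp := contr_relu
lemma contr_φm : Contr φm := contr_neg_relu

lemma class_bound {k n : ℕ} {M : ℝ} (hM : 0 < M) (x : Fin n → Euc d)
    (v : Fin n → E2 d) (hvdef : ∀ i, v i = mkE2 (x i) 1)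
    (hv : ∀ i, ‖v i‖ ≤ Real.sqrt 2) (c : Fin n → ℝ) :
    ∀ y ∈ (fun g : Euc d → ℝ => |∑ i, c i * g (x i)|) '' reluClass d k M,
      y ≤ M * (bsup v (fun _ => φp) c + bsup v (fun _ => φm) c) := by
  rintro y ⟨g, ⟨a, θ, b, hg, hJ⟩, rfl⟩
  set bp := bsup v (fun _ => φp) c with hbp
  set bm := bsup v (fun _ => φm) c with hbm
  have hbpn : 0 ≤ bp := bsup_nonneg hv (fun _ => contr_φp) c
  have hbmn : 0 ≤ bm := bsup_nonneg hv (fun _ => contr_φm) c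
  set w : Fin k → E2 d := fun j => mkE2 (θ j) (b j) with hw
  have hinner : ∀ j i, ⟪w j, v i⟫ = ∑ l, θ j l * x i l + b j := by
    intro j i
    rw [hw, hvdef i, mkE2_inner]
    ring
  set D : Fin k → ℝ := fun j => ∑ i, c i * φp ⟪w j, v i⟫ with hD
  have hswap : ∑ i, c i * g (x i) = ∑ j, a j * D j := by
    calc ∑ i, c i * g (x i)
        = ∑ i, ∑ j, a j * φp ⟪w j, v i⟫ * c i := by
          refine Finset.sum_congr rfl fun i _ => ?_
          rw [hg (x i), Finset.mul_sum]
          refine Finset.sum_congr rfl fun j _ => ?_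
          simp only [φp, hinner j i]
          ring
      _ = ∑ j, a j * D j := by
          rw [Finset.sum_comm]
          refine Finset.sum_congr rfl fun j _ => ?_
          rw [hD, Finset.mul_sum]
          refine Finset.sum_congr rfl fun i _ => ?_
          ring
  have claim : ∀ j, |D j| ≤ ‖w j‖ * (bp + bm) := by
    intro j
    by_cases hwj : w j = 0
    · have hz : D j = 0 := by
        rw [hD]
        refine Finset.sum_eq_zero fun i _ => ?_
        rw [hwj, inner_zero_left]
        simp [φp]
      rw [hz, hwj]
      simp
    · set u : E2 d := ‖w j‖⁻¹ • w j with hu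
      have hnw : (0:ℝ) < ‖w j‖ := norm_pos_iff.2 hwj
      have hun : ‖u‖ ≤ 1 := by
        rw [hu, norm_smul, norm_inv, norm_norm, inv_mul_cancel₀ (ne_of_gt hnw)]
      have hhom : ∀ i, φp ⟪w j, v i⟫ = ‖w j‖ * φp ⟪u, v i⟫ := by
        intro i
        have h1 : ⟪u, v i⟫ = ‖w j‖⁻¹ * ⟪w j, v i⟫ := by
          rw [hu]
          exact real_inner_smul_left _ _ _
        rw [h1]
        simp only [φp]
        rw [mul_max_of_nonneg _ _ (le_of_lt hnw), mul_zero,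
          ← mul_assoc, mul_inv_cancel₀ (ne_of_gt hnw), one_mul]
      have hZ : D j = ‖w j‖ * ∑ i, c i * φp ⟪u, v i⟫ := by
        rw [hD, Finset.mul_sum]
        refine Finset.sum_congr rfl fun i _ => ?_
        rw [hhom i]; ring
      set Z := ∑ i, c i * φp ⟪u, v i⟫ with hZdef
      have hZbound : |Z| ≤ bp + bm := by
        rcases abs_cases Z with ⟨he, _⟩ | ⟨he, _⟩
        · rw [he]
          have : Z ≤ bp := le_bsup hv (fun _ => contr_φp) c ⟨u, hun⟩
          linarith
        · rw [he]
          have hneg : -Z = ∑ i, c i * φm ⟪u, v i⟫ := by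
            rw [hZdef, ← Finset.sum_neg_distrib]
            refine Finset.sum_congr rfl fun i _ => ?_
            simp only [φm, φp]; ring
          have : -Z ≤ bm := by
            rw [hneg]; exact le_bsup hv (fun _ => contr_φm) c ⟨u, hun⟩
          linarith
      rw [hZ, abs_mul, abs_of_nonneg (le_of_lt hnw)]
      exact mul_le_mul_of_nonneg_left hZbound (le_of_lt hnw)
  calc |∑ i, c i * g (x i)| = |∑ j, a j * D j| := by rw [hswap]
    _ ≤ ∑ j, |a j * D j| := Finset.abs_sum_le_sum_abs _ _
    _ ≤ ∑ j, |a j| * (‖w j‖ * (bp + bm)) := by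
        refine Finset.sum_le_sum fun j _ => ?_
        rw [abs_mul]
        exact mul_le_mul_of_nonneg_left (claim j) (abs_nonneg _)
    _ = (∑ j, |a j| * ‖w j‖) * (bp + bm) := by
        rw [Finset.sum_mul]
        exact Finset.sum_congr rfl fun j _ => by ring
    _ ≤ M * (bp + bm) := by
        refine mul_le_mul_of_nonneg_right ?_ (by linarith)
        refine le_trans (le_of_eq ?_) hJ
        refine Finset.sum_congr rfl fun j _ => ?_
        rw [hw, mkE2_norm]
end Glue

/-- Proposition 1: for the two-layer ReLU class with path norm at most `M`, both the empirical
Rademacher and the empirical Gaussian complexity at any points of `B_1^d` are at most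
`c(d)·M/√n`, with `c(d)` depending only on `d`. -/
theorem statement_7 (d : ℕ) :
    ∃ c > (0 : ℝ), ∀ (M : ℝ), 0 < M → ∀ (k n : ℕ) (x : Fin n → Euc d),
      (∀ i, x i ∈ Metric.closedBall (0 : Euc d) 1) →
      empRad n (reluClass d k M) x ≤ c * M / Real.sqrt n ∧
      empGauss n (reluClass d k M) x ≤ c * M / Real.sqrt n := by
  classical
  refine ⟨12, by norm_num, ?_⟩
  intro M hM k n x hx
  set v : Fin n → E2 d := fun i => mkE2 (x i) 1 with hvdef
  have hv : ∀ i, ‖v i‖ ≤ Real.sqrt 2 := by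
    intro i
    have hx1 : ‖x i‖ ≤ 1 := by
      have := hx i
      rwa [Metric.mem_closedBall, dist_zero_right] at this
    have h2 : ‖x i‖ ^ 2 + 1 ^ 2 ≤ 2 := by nlinarith [norm_nonneg (x i)]
    calc ‖v i‖ = Real.sqrt (‖x i‖ ^ 2 + 1 ^ 2) := by rw [hvdef]; exact mkE2_norm _ _
      _ ≤ Real.sqrt 2 := Real.sqrt_le_sqrt h2
  rcases Nat.eq_zero_or_pos n with rfl | hn
  · constructor
    · simp [empRad]
    · simp [empGauss]
  have hn' : (0:ℝ) < n := by exact_mod_cast hn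
  have hsSup : ∀ c : Fin n → ℝ,
      sSup ((fun g : Euc d → ℝ => |∑ i, c i * g (x i)|) '' reluClass d k M) ≤
        M * (bsup v (fun _ => φp) c + bsup v (fun _ => φm) c) := by
    intro c
    have hp0 := bsup_nonneg hv (fun _ => contr_φp) c
    have hm0 := bsup_nonneg hv (fun _ => contr_φm) c
    refine Real.sSup_le (class_bound hM x v (fun i => rfl) hv c) ?_
    have : 0 ≤ bsup v (fun _ => φp) c + bsup v (fun _ => φm) c := by linarith
    exact mul_nonneg hM.le this
  have hsq : Real.sqrt (32 * n) = Real.sqrt 32 * Real.sqrt n := Real.sqrt_mul (by norm_num) _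
  have h32 : Real.sqrt 32 ≤ 6 := by
    rw [show (6:ℝ) = Real.sqrt 36 by
      rw [show (36:ℝ) = 6 ^ 2 by norm_num, Real.sqrt_sq]; norm_num]
    exact Real.sqrt_le_sqrt (by norm_num)
  have hsn : 0 < Real.sqrt n := Real.sqrt_pos.2 hn'
  have htarget : 2 * Real.sqrt (32 * n) * M / n ≤ 12 * M / Real.sqrt n := by
    rw [hsq, div_le_div_iff₀ (by positivity) (by positivity)]
    have hss : Real.sqrt n * Real.sqrt n = n := Real.mul_self_sqrt hn'.le
    have hrw : 2 * (Real.sqrt 32 * Real.sqrt n) * M * Real.sqrt n =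
        2 * Real.sqrt 32 * M * (Real.sqrt n * Real.sqrt n) := by ring
    rw [hrw, hss]
    nlinarith [h32, mul_nonneg hM.le hn'.le]
  constructor
  · -- Rademacher bound
    rw [empRad]
    have hchainp : ∑ s : Fin n → Bool, bsup v (fun _ => φp) (rsign s) ≤
        2 ^ n * Real.sqrt (32 * n) :=
      le_trans (rad_contraction hv contr_φp)
        (le_trans (Finset.sum_le_sum fun s _ => bsup_id_le (rsign s)) (rad_total hv))
    have hchainm : ∑ s : Fin n → Bool, bsup v (fun _ => φm) (rsign s) ≤
        2 ^ n * Real.sqrt (32 * n) :=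
      le_trans (rad_contraction hv contr_φm)
        (le_trans (Finset.sum_le_sum fun s _ => bsup_id_le (rsign s)) (rad_total hv))
    have hsum : ∑ s : Fin n → Bool, (1/(n:ℝ)) *
        sSup ((fun g : Euc d → ℝ =>
          |∑ i, (if s i then (1:ℝ) else -1) * g (x i)|) '' reluClass d k M) ≤
        ∑ s : Fin n → Bool, ((1/(n:ℝ)) * M) *
          (bsup v (fun _ => φp) (rsign s) + bsup v (fun _ => φm) (rsign s)) := by
      refine Finset.sum_le_sum fun s _ => ?_
      rw [mul_assoc]
      exact mul_le_mul_of_nonneg_left (hsSup (rsign s)) (by positivity)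
    calc (1 / (2:ℝ) ^ n) * ∑ s : Fin n → Bool, (1/(n:ℝ)) *
          sSup ((fun g : Euc d → ℝ =>
            |∑ i, (if s i then (1:ℝ) else -1) * g (x i)|) '' reluClass d k M)
        ≤ (1 / (2:ℝ) ^ n) * ∑ s : Fin n → Bool, ((1/(n:ℝ)) * M) *
            (bsup v (fun _ => φp) (rsign s) + bsup v (fun _ => φm) (rsign s)) :=
          mul_le_mul_of_nonneg_left hsum (by positivity)
      _ = (1 / (2:ℝ) ^ n) * (((1/(n:ℝ)) * M) *
            ((∑ s : Fin n → Bool, bsup v (fun _ => φp) (rsign s)) +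
              ∑ s : Fin n → Bool, bsup v (fun _ => φm) (rsign s))) := by
          rw [← Finset.mul_sum, Finset.sum_add_distrib]
      _ ≤ (1 / (2:ℝ) ^ n) * (((1/(n:ℝ)) * M) *
            (2 ^ n * Real.sqrt (32 * n) + 2 ^ n * Real.sqrt (32 * n))) := by
          refine mul_le_mul_of_nonneg_left ?_ (by positivity)
          exact mul_le_mul_of_nonneg_left (add_le_add hchainp hchainm) (by positivity)
      _ = 2 * Real.sqrt (32 * n) * M / n := by
          have h2n : ((2:ℝ) ^ n) ≠ 0 := by positivity
          field_simp
          ring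
      _ ≤ 12 * M / Real.sqrt n := htarget
  · -- Gaussian bound
    rw [empGauss]
    by_cases hI : Integrable (fun ε : Fin n → ℝ => (1/(n:ℝ)) *
        sSup ((fun g : Euc d → ℝ => |∑ i, ε i * g (x i)|) '' reluClass d k M))
        (Measure.pi fun _ : Fin n => gaussianReal 0 1)
    · have hip := bsup_integrable (v := v) hv (fun _ => contr_φp)
      have him := bsup_integrable (v := v) hv (fun _ => contr_φm)
      have hBint : Integrable (fun ε : Fin n → ℝ => ((1/(n:ℝ)) * M) *
          (bsup v (fun _ => φp) ε + bsup v (fun _ => φm) ε))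
          (Measure.pi fun _ : Fin n => gaussianReal 0 1) :=
        (hip.add him).const_mul _
      have hmono := integral_mono hI hBint (fun ε => by
        rw [mul_assoc]
        exact mul_le_mul_of_nonneg_left (hsSup ε) (by positivity))
      refine le_trans hmono ?_
      rw [integral_const_mul, integral_add hip him]
      have h1 : ∫ ε, bsup v (fun _ => φp) ε ∂(Measure.pi fun _ : Fin n => gaussianReal 0 1) ≤
          Real.sqrt (32 * n) :=
        le_trans (gauss_contraction hv contr_φp) (gauss_total hv)
      have h2 : ∫ ε, bsup v (fun _ => φm) ε ∂(Measure.pi fun _ : Fin n => gaussianReal 0 1) ≤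
          Real.sqrt (32 * n) :=
        le_trans (gauss_contraction hv contr_φm) (gauss_total hv)
      calc ((1/(n:ℝ)) * M) *
            ((∫ ε, bsup v (fun _ => φp) ε ∂(Measure.pi fun _ : Fin n => gaussianReal 0 1)) +
              ∫ ε, bsup v (fun _ => φm) ε ∂(Measure.pi fun _ : Fin n => gaussianReal 0 1))
          ≤ ((1/(n:ℝ)) * M) * (Real.sqrt (32 * n) + Real.sqrt (32 * n)) :=
            mul_le_mul_of_nonneg_left (add_le_add h1 h2) (by positivity)
        _ = 2 * Real.sqrt (32 * n) * M / n := by field_simp; ring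
        _ ≤ 12 * M / Real.sqrt n := htarget
    · rw [integral_undef hI]
      positivity
end

section
/- Let σ: ℝ → ℝ be a sigmoid activation: differentiable, increasing, with 0 < σ(t) < 1 for all t. Consider the class of subgraphs C_{θ,b} := {(x,y) ∈ ℝ^d × ℝ : σ(θ^T x + b) > y} for θ ∈ ℝ^d, b ∈ ℝ. Then this collection has VC dimension at most d + 1: for any N ≥ d + 2 points (x_1,y_1),…,(x_N,y_N) ∈ ℝ^d × ℝ, the family {C_{θ,b} ∩ {(x_1,y_1),…,(x_N,y_N)} : θ ∈ ℝ^d, b ∈ ℝ} does not contain all 2^N subsets of the point set. -/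
/-- A continuous strictly monotone function's strict superlevel set `{t | y < σ t}`,
if nonempty and proper, is an open ray `(c, ∞)`. -/
lemma sigmoid_threshold {σs : ℝ → ℝ} (hcont : Continuous σs) (hmono : StrictMono σs)
    {y : ℝ} (h1 : ∃ t, y < σs t) (h2 : ∃ t, σs t ≤ y) :
    ∃ c : ℝ, ∀ t, y < σs t ↔ c < t := by
  obtain ⟨t0, ht0⟩ := h2
  have hbdd : BddBelow {t | y < σs t} := by
    refine ⟨t0, fun s hs => ?_⟩
    by_contra hlt
    push_neg at hlt
    exact absurd (lt_of_le_of_lt ht0 hs) (not_lt.2 (hmono.le_iff_le.2 hlt.le))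
  set c := sInf {t | y < σs t} with hc
  refine ⟨c, fun t => ⟨fun ht => ?_, fun ht => ?_⟩⟩
  · have ho : IsOpen {t | y < σs t} := isOpen_lt continuous_const hcont
    obtain ⟨ε, hε, hball⟩ := Metric.isOpen_iff.1 ho t ht
    have hmem : t - ε / 2 ∈ {t | y < σs t} := by
      apply hball
      rw [Metric.mem_ball, Real.dist_eq, abs_of_nonpos (by linarith)]
      linarith
    have := csInf_le hbdd hmem
    linarith [this]
  · obtain ⟨s, hs, hst⟩ := exists_lt_of_csInf_lt h1 ht
    exact lt_trans hs (hmono hst)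

/-- The VC dimension of the subgraph class `{(x,y) : σ_s(θ^T x + b) > y}` of single sigmoid
neurons is at most `d + 1`: no set of `N ≥ d + 2` points of `ℝ^d × ℝ` is shattered. -/
theorem statement_14
    (d : ℕ) (σs : ℝ → ℝ)
    (hdiff : Differentiable ℝ σs) (hmono : StrictMono σs)
    (hbd : ∀ t, σs t ∈ Set.Ioo (0 : ℝ) 1)
    (N : ℕ) (hN : d + 2 ≤ N)
    (p : Fin N → Euc d × ℝ) :
    ¬ (∀ S : Set (Fin N), ∃ (θ : Euc d) (b : ℝ),
        ∀ i : Fin N, (σs (∑ l : Fin d, θ l * (p i).1 l + b) > (p i).2 ↔ i ∈ S)) := by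
  intro H
  -- Step 1: reduce every point's constraint to a threshold condition.
  by_cases hall : ∀ i : Fin N, (∃ t, (p i).2 < σs t) ∧ (∃ t, σs t ≤ (p i).2)
  · -- thresholds
    choose c hc using fun i =>
      sigmoid_threshold hdiff.continuous hmono (hall i).1 (hall i).2
    -- reformulated shattering
    have H' : ∀ S : Set (Fin N), ∃ (θ : Euc d) (b : ℝ),
        ∀ i : Fin N, (c i < ∑ l : Fin d, θ l * (p i).1 l + b ↔ i ∈ S) := by
      intro S
      obtain ⟨θ, b, hθ⟩ := H S
      exact ⟨θ, b, fun i => ((hc i _).symm.trans (hθ i))⟩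
    -- Step 2: linear dependence of the (x_i, 1) in ℝ^{d+1}.
    have hdep : ¬ LinearIndependent ℝ
        (fun i : Fin N => (Fin.snoc (fun l => (p i).1 l) 1 : Fin (d + 1) → ℝ)) := by
      intro hli
      have := hli.fintype_card_le_finrank
      simp [Module.finrank_fin_fun] at this
      omega
    obtain ⟨a, hsum, j, hj⟩ := Fintype.not_linearIndependent_iff.mp hdep
    have h1 : ∀ l : Fin d, ∑ i, a i * (p i).1 l = 0 := by
      intro l
      have := congrFun hsum (Fin.castSucc l)
      simpa [Finset.sum_apply, Fin.snoc_castSucc] using this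
    have h2 : (∑ i, a i) = 0 := by
      have := congrFun hsum (Fin.last d)
      simpa [Finset.sum_apply, Fin.snoc_last] using this
    -- key linear identity
    have key : ∀ (θ : Euc d) (b : ℝ),
        ∑ i, a i * (∑ l : Fin d, θ l * (p i).1 l + b) = 0 := by
      intro θ b
      have : ∑ i, a i * (∑ l : Fin d, θ l * (p i).1 l + b)
          = ∑ l : Fin d, θ l * (∑ i, a i * (p i).1 l) + (∑ i, a i) * b := by
        simp only [mul_add, Finset.sum_add_distrib, Finset.mul_sum, Finset.sum_mul]
        rw [Finset.sum_comm]
        congr 1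
        · exact Finset.sum_congr rfl fun l _ => Finset.sum_congr rfl fun i _ => by ring
      rw [this, h2]
      simp [h1]
    -- Step 3: evaluate on the two sign sets.
    obtain ⟨θp, bp, hp⟩ := H' {i | 0 < a i}
    obtain ⟨θm, bm, hm⟩ := H' {i | a i < 0}
    set fp : Fin N → ℝ := fun i => ∑ l : Fin d, θp l * (p i).1 l + bp with hfp
    set fm : Fin N → ℝ := fun i => ∑ l : Fin d, θm l * (p i).1 l + bm with hfm
    have hpnn : ∀ i : Fin N, 0 ≤ a i * (fp i - c i) := by
      intro i
      rcases lt_trichotomy (a i) 0 with h | h | h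
      · have : ¬ (c i < fp i) := by
          intro hcf
          exact absurd ((hp i).1 hcf) (by simpa using not_lt.2 h.le)
        push_neg at this
        nlinarith
      · simp [h]
      · have : c i < fp i := (hp i).2 (by simpa using h)
        exact mul_nonneg h.le (by linarith)
    have hmnp : ∀ i : Fin N, a i * (fm i - c i) ≤ 0 := by
      intro i
      rcases lt_trichotomy (a i) 0 with h | h | h
      · have : c i < fm i := (hm i).2 (by simpa using h)
        exact mul_nonpos_of_nonpos_of_nonneg h.le (by linarith)
      · simp [h]
      · have : ¬ (c i < fm i) := by
          intro hcf
          exact absurd ((hm i).1 hcf) (by simpa using not_lt.2 h.le)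
        push_neg at this
        exact mul_nonpos_of_nonneg_of_nonpos h.le (by linarith)
    have hsp : ∑ i, a i * (fp i - c i) = -∑ i, a i * c i := by
      have := key θp bp
      simp only [mul_sub]
      rw [Finset.sum_sub_distrib, this]
      ring
    have hsm : ∑ i, a i * (fm i - c i) = -∑ i, a i * c i := by
      have := key θm bm
      simp only [mul_sub]
      rw [Finset.sum_sub_distrib, this]
      ring
    have hzero : ∑ i, a i * (fp i - c i) = 0 := by
      have h1' : 0 ≤ ∑ i, a i * (fp i - c i) := Finset.sum_nonneg fun i _ => hpnn i
      have h2' : ∑ i, a i * (fm i - c i) ≤ 0 := Finset.sum_nonpos fun i _ => hmnp i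
      rw [hsp]; rw [hsm] at h2'; rw [hsp] at h1'; linarith
    have hzerom : ∑ i, a i * (fm i - c i) = 0 := by rw [hsm, ← hsp, hzero]
    rcases hj.lt_or_gt with h | h
    · -- a j < 0 : term j in the m-sum is strictly negative
      have hterm : a j * (fm j - c j) = 0 := by
        have := (Finset.sum_eq_zero_iff_of_nonpos (fun i _ => hmnp i)).1 hzerom j
          (Finset.mem_univ j)
        exact this
      have : c j < fm j := (hm j).2 (by simpa using h)
      nlinarith
    · -- a j > 0 : term j in the p-sum is strictly positive
      have hterm : a j * (fp j - c j) = 0 := by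
        exact (Finset.sum_eq_zero_iff_of_nonneg (fun i _ => hpnn i)).1 hzero j
          (Finset.mem_univ j)
      have : c j < fp j := (hp j).2 (by simpa using h)
      nlinarith
  · -- some point has a constant constraint
    push_neg at hall
    obtain ⟨i, hi⟩ := hall
    by_cases hex : ∃ t, (p i).2 < σs t
    · have hforall : ∀ t, (p i).2 < σs t := by
        have := hi hex
        exact this
      obtain ⟨θ, b, hθ⟩ := H (∅ : Set (Fin N))
      exact absurd ((hθ i).1 (hforall _)) (by simp)
    · push_neg at hex
      obtain ⟨θ, b, hθ⟩ := H (Set.univ : Set (Fin N))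
      exact absurd ((hθ i).2 (by simp)) (not_lt.2 (hex _))
end

section
/- For every δ > 0 and every M > 0, the following integral inequality holds: ∫_0^δ √(ln(1 + M/u)) du ≤ δ·√(ln(1 + M/δ) + 4). -/
open MeasureTheory Set Filter Real

/-- `log` is integrable on `Ioc 0 δ`. -/
lemma integrableOn_log_Ioc (δ : ℝ) (hδ : 0 < δ) :
    IntegrableOn Real.log (Set.Ioc 0 δ) := by
  have hB : IntegrableOn (fun u : ℝ => 2 * u ^ (-(1/2) : ℝ) + |Real.log δ|) (Set.Ioc 0 δ) := by
    have h1 : IntervalIntegrable (fun u : ℝ => 2 * u ^ (-(1/2) : ℝ) + |Real.log δ|)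
        volume 0 δ := by
      exact ((intervalIntegral.intervalIntegrable_rpow' (by norm_num)).const_mul 2).add
        intervalIntegrable_const
    simpa [intervalIntegrable_iff_integrableOn_Ioc_of_le hδ.le] using h1
  refine hB.integrable.mono' Real.measurable_log.aestronglyMeasurable ?_
  rw [ae_restrict_iff' measurableSet_Ioc]
  filter_upwards with u hu
  obtain ⟨hu0, huδ⟩ := hu
  have hrpow : (0 : ℝ) < u ^ (-(1/2) : ℝ) := Real.rpow_pos_of_pos hu0 _
  have hneg : -Real.log u ≤ 2 * u ^ (-(1/2) : ℝ) := by
    have h := Real.log_le_sub_one_of_pos hrpow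
    rw [Real.log_rpow hu0] at h
    nlinarith
  have hpos : Real.log u ≤ |Real.log δ| := by
    calc Real.log u ≤ Real.log δ := Real.log_le_log hu0 huδ
    _ ≤ |Real.log δ| := le_abs_self _
  rw [Real.norm_eq_abs, abs_le]
  constructor <;> nlinarith [abs_nonneg (Real.log δ)]

/-- The improper integral of `log` on `(0, δ]`. -/
lemma integral_log_Ioc (δ : ℝ) (hδ : 0 < δ) :
    ∫ u in Set.Ioc 0 δ, Real.log u = δ * Real.log δ - δ := by
  set s : ℕ → Set ℝ := fun n => Set.Ioc (δ / (n + 1)) δ with hs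
  have hεpos : ∀ n : ℕ, 0 < δ / (n + 1 : ℝ) := fun n => by positivity
  have hsm : ∀ n, MeasurableSet (s n) := fun n => measurableSet_Ioc
  have hmono : Monotone s := by
    intro m n hmn
    apply Set.Ioc_subset_Ioc_left
    exact div_le_div_of_nonneg_left hδ.le (by positivity)
      (by push_cast; linarith [(Nat.cast_le (α := ℝ)).2 hmn])
  have hunion : (⋃ n, s n) = Set.Ioc 0 δ := by
    ext x
    simp only [hs, Set.mem_iUnion, Set.mem_Ioc]
    constructor
    · rintro ⟨n, h1, h2⟩
      exact ⟨lt_trans (hεpos n) h1, h2⟩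
    · rintro ⟨hx0, hxδ⟩
      obtain ⟨n, hn⟩ := exists_nat_gt (δ / x)
      refine ⟨n, ?_, hxδ⟩
      rw [div_lt_iff₀ (by positivity)]
      rw [div_lt_iff₀ hx0] at hn
      nlinarith
  have hint : IntegrableOn Real.log (⋃ n, s n) := hunion ▸ integrableOn_log_Ioc δ hδ
  have htend := MeasureTheory.tendsto_setIntegral_of_monotone hsm hmono hint
  rw [hunion] at htend
  -- compute each piece
  have hval : ∀ n : ℕ, (∫ x in s n, Real.log x)
      = δ * Real.log δ - (δ / (n+1)) * Real.log (δ / (n+1)) - δ + δ / (n+1) := by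
    intro n
    rw [← intervalIntegral.integral_of_le (by
      calc δ / (n + 1 : ℝ) ≤ δ / 1 := by
            apply div_le_div_of_nonneg_left hδ.le one_pos (by exact_mod_cast by linarith)
        _ = δ := div_one δ)]
    rw [integral_log]
  -- limit of the explicit values
  have hεtend : Tendsto (fun n : ℕ => δ / (n + 1 : ℝ)) atTop (nhds 0) := by
    simpa using tendsto_const_nhds.div_atTop
      (tendsto_atTop_add_const_right atTop (1:ℝ) tendsto_natCast_atTop_atTop)
  have hεtend' : Tendsto (fun n : ℕ => δ / (n + 1 : ℝ)) atTop (nhdsWithin 0 (Set.Ioi 0)) := by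
    rw [tendsto_nhdsWithin_iff]
    exact ⟨hεtend, Filter.Eventually.of_forall fun n => hεpos n⟩
  have hxlogx : Tendsto (fun x : ℝ => Real.log x * x) (nhdsWithin 0 (Set.Ioi 0)) (nhds 0) := by
    simpa using tendsto_log_mul_rpow_nhdsGT_zero one_pos
  have htend2 : Tendsto (fun n : ℕ =>
      δ * Real.log δ - (δ / (n+1)) * Real.log (δ / (n+1)) - δ + δ / (n+1)) atTop
      (nhds (δ * Real.log δ - 0 - δ + 0)) := by
    refine Tendsto.add (Tendsto.sub (Tendsto.sub tendsto_const_nhds ?_) tendsto_const_nhds) hεtend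
    have := hxlogx.comp hεtend'
    simpa [Function.comp_def, mul_comm] using this
  have := tendsto_nhds_unique (htend.congr hval) htend2
  simpa using this

/-- The entropy-integral inequality:
`∫_0^δ √(ln(1 + M/u)) du ≤ δ √(ln(1 + M/δ) + 4)` for all `δ, M > 0`. -/
theorem statement_15 (δ M : ℝ) (hδ : 0 < δ) (hM : 0 < M) :
    (∫ u in Set.Ioo (0 : ℝ) δ, Real.sqrt (Real.log (1 + M / u)))
      ≤ δ * Real.sqrt (Real.log (1 + M / δ) + 4) := by
  set L := Real.log (1 + M / δ) with hLdef
  have hL : 0 ≤ L := Real.log_nonneg (by linarith [div_pos hM hδ])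
  set a := L + 4 with hadef
  have ha : 0 < a := by positivity
  set s := Real.sqrt a with hsdef
  have hs : 0 < s := Real.sqrt_pos.2 ha
  have hs2 : s ^ 2 = a := Real.sq_sqrt ha.le
  -- the comparison function
  set g : ℝ → ℝ := fun u => (L + Real.log δ - Real.log u + a) / (2 * s) with hgdef
  have hIlog := integrableOn_log_Ioc δ hδ
  have hIg : IntegrableOn g (Set.Ioc 0 δ) := by
    have : IntegrableOn (fun u => L + Real.log δ - Real.log u + a) (Set.Ioc 0 δ) :=
      ((integrable_const _).sub hIlog).add (integrable_const _)
    exact this.div_const _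
  -- pointwise bound
  have hpt : ∀ u ∈ Set.Ioc (0:ℝ) δ, Real.sqrt (Real.log (1 + M / u)) ≤ g u := by
    intro u hu
    obtain ⟨hu0, huδ⟩ := hu
    set x := Real.log (1 + M / u) with hxdef
    have hx0 : 0 ≤ x := Real.log_nonneg (by linarith [div_pos hM hu0])
    have hxle : x ≤ L + Real.log δ - Real.log u := by
      have h1 : 1 + M / u ≤ (1 + M / δ) * (δ / u) := by
        have he : (1 + M / δ) * (δ / u) = δ / u + M / u := by field_simp
        have h2 : (1:ℝ) ≤ δ / u := (one_le_div hu0).2 huδ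
        rw [he]; linarith
      have h3 : x ≤ Real.log ((1 + M / δ) * (δ / u)) :=
        Real.log_le_log (by positivity) h1
      rw [Real.log_mul (by positivity) (by positivity),
        Real.log_div (ne_of_gt hδ) (ne_of_gt hu0)] at h3
      rw [hLdef]; linarith
    have hsq : Real.sqrt x ≤ (x + a) / (2 * s) := by
      rw [le_div_iff₀ (by positivity)]
      nlinarith [sq_nonneg (Real.sqrt x - s), Real.sq_sqrt hx0, Real.sqrt_nonneg x]
    calc Real.sqrt x ≤ (x + a) / (2 * s) := hsq
      _ ≤ g u := (div_le_div_iff_of_pos_right (by positivity)).2 (by linarith)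
  -- integrability of the integrand
  have hIf : IntegrableOn (fun u => Real.sqrt (Real.log (1 + M / u))) (Set.Ioc 0 δ) := by
    refine hIg.integrable.mono' ?_ ?_
    · apply Measurable.aestronglyMeasurable
      exact Real.continuous_sqrt.measurable.comp
        (Real.measurable_log.comp (measurable_const.add (measurable_const.div measurable_id)))
    · rw [ae_restrict_iff' measurableSet_Ioc]
      filter_upwards with u hu
      rw [Real.norm_eq_abs, abs_of_nonneg (Real.sqrt_nonneg _)]
      exact hpt u hu
  -- compare the integrals
  have hcomp : (∫ u in Set.Ioc (0:ℝ) δ, Real.sqrt (Real.log (1 + M / u)))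
      ≤ ∫ u in Set.Ioc (0:ℝ) δ, g u :=
    setIntegral_mono_on hIf hIg measurableSet_Ioc hpt
  -- compute ∫ g
  have hg_val : (∫ u in Set.Ioc (0:ℝ) δ, g u) = δ * (2 * L + 5) / (2 * s) := by
    have h1 : (∫ u in Set.Ioc (0:ℝ) δ, (L + Real.log δ - Real.log u + a))
        = δ * (L + Real.log δ + a) - (δ * Real.log δ - δ) := by
      rw [show (fun u : ℝ => L + Real.log δ - Real.log u + a)
          = fun u : ℝ => (L + Real.log δ + a) - Real.log u by funext u; ring]
      rw [integral_sub (integrable_const _) hIlog, setIntegral_const,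
        integral_log_Ioc δ hδ, Real.volume_real_Ioc]
      rw [max_eq_left (by linarith), smul_eq_mul]
      ring
    calc (∫ u in Set.Ioc (0:ℝ) δ, g u)
        = (∫ u in Set.Ioc (0:ℝ) δ, (L + Real.log δ - Real.log u + a)) / (2 * s) := by
          rw [hgdef]; exact integral_div _ _
      _ = (δ * (L + Real.log δ + a) - (δ * Real.log δ - δ)) / (2 * s) := by rw [h1]
      _ = δ * (2 * L + 5) / (2 * s) := by rw [hadef]; ring_nf
  -- final numeric inequality
  have hfinal : δ * (2 * L + 5) / (2 * s) ≤ δ * s := by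
    rw [div_le_iff₀ (by positivity)]
    nlinarith
  calc (∫ u in Set.Ioo (0 : ℝ) δ, Real.sqrt (Real.log (1 + M / u)))
      = ∫ u in Set.Ioc (0 : ℝ) δ, Real.sqrt (Real.log (1 + M / u)) :=
        (MeasureTheory.integral_Ioc_eq_integral_Ioo).symm
    _ ≤ ∫ u in Set.Ioc (0:ℝ) δ, g u := hcomp
    _ = δ * (2 * L + 5) / (2 * s) := hg_val
    _ ≤ δ * s := hfinal
end

section
/- For every polynomial p: ℝ^d → ℝ there exists a function g: ℝ^d → ℝ such that g(x) = p(x) for all x in the closed unit ball B_1^d and ∫_{ℝ^d} (‖ω‖_2 + 1)|[F g](ω)| dω < ∞, where [F g] is the Fourier transform of g. In particular, the restriction of every polynomial to B_1^d belongs to the Barron class Γ of functions on B_1^d admitting an extension with finite weighted Fourier moment ∫(‖ω‖_2 + 1)|[F g̃](ω)| dω. -/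
open MeasureTheory
open scoped ENNReal

noncomputable section

lemma aux_toSchwartz {d : ℕ} (f : Euc d → ℂ)
    (hf : ContDiff ℝ ((⊤ : ℕ∞) : WithTop ℕ∞) f) (hsupp : HasCompactSupport f) :
    ∃ F : SchwartzMap (Euc d) ℂ, ⇑F = f := by
  refine ⟨⟨f, hf, fun k n => ?_⟩, rfl⟩
  have h1 : HasCompactSupport (fun x => ‖x‖ ^ k * ‖iteratedFDeriv ℝ n f x‖) := by
    have := (hsupp.iteratedFDeriv (𝕜 := ℝ) (n := n)).norm
    exact HasCompactSupport.mul_left this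
  have h2 : Continuous (fun x : Euc d => ‖x‖ ^ k * ‖iteratedFDeriv ℝ n f x‖) := by
    exact ((continuous_norm.pow k).mul
      ((hf.continuous_iteratedFDeriv (mod_cast le_top)).norm))
  obtain ⟨C, hC⟩ := h2.bounded_above_of_compact_support h1
  exact ⟨C, fun x => (le_abs_self _).trans (hC x)⟩

/-- Every polynomial on `ℝ^d`, restricted to the closed unit ball, belongs to the Barron class:
there is an extension `g` agreeing with the polynomial on `B_1^d` whose weighted Fourier moment
`∫_{ℝ^d} (‖ω‖₂ + 1)|𝓕 g (ω)| dω` is finite. -/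
theorem statement_17 (d : ℕ) (q : MvPolynomial (Fin d) ℝ) :
    ∃ g : Euc d → ℝ,
      (∀ x ∈ Metric.closedBall (0 : Euc d) 1,
        g x = MvPolynomial.eval (fun l => x l) q) ∧
      (∫⁻ ω : Euc d,
          ENNReal.ofReal ((‖ω‖ + 1) *
            ‖VectorFourier.fourierIntegral Real.fourierChar volume (innerₗ (Euc d))
              (fun x : Euc d => (g x : ℂ)) ω‖)) < ⊤ := by
  -- the polynomial evaluation map
  set P : Euc d → ℝ := fun x => MvPolynomial.eval (fun l => x l) q with hP
  have hPsmooth : ContDiff ℝ ((⊤ : ℕ∞) : WithTop ℕ∞) P := by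
    have := AnalyticOnNhd.eval_continuousLinearMap
      (𝕜 := ℝ) ((EuclideanSpace.equiv (Fin d) ℝ : Euc d ≃L[ℝ] (Fin d → ℝ)) :
        Euc d →L[ℝ] (Fin d → ℝ)) q
    have h := this.contDiff (n := (⊤ : ℕ∞))
    exact h
  -- the bump function
  let φ : ContDiffBump (0 : Euc d) := ⟨1, 2, one_pos, one_lt_two⟩
  set g : Euc d → ℝ := fun x => φ x * P x with hg
  have hgsmooth : ContDiff ℝ ((⊤ : ℕ∞) : WithTop ℕ∞) g := φ.contDiff.mul hPsmooth
  have hgsupp : HasCompactSupport g := φ.hasCompactSupport.mul_right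
  have hfc : ContDiff ℝ ((⊤ : ℕ∞) : WithTop ℕ∞) (fun x : Euc d => (g x : ℂ)) :=
    Complex.ofRealCLM.contDiff.comp hgsmooth
  have hfsupp : HasCompactSupport (fun x : Euc d => (g x : ℂ)) :=
    hgsupp.comp_left (g := Complex.ofReal) Complex.ofReal_zero
  obtain ⟨F, hF⟩ := aux_toSchwartz _ hfc hfsupp
  set G : SchwartzMap (Euc d) ℂ := FourierTransform.fourier F with hGdef
  have hG : ⇑G = VectorFourier.fourierIntegral Real.fourierChar volume (innerₗ (Euc d)) ⇑F := rfl
  refine ⟨g, ?_, ?_⟩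
  · intro x hx
    have hφ : φ x = 1 := φ.one_of_mem_closedBall hx
    simp [hg, hφ, hP]
  · have hint : Integrable (fun ω : Euc d => (‖ω‖ + 1) * ‖G ω‖) volume := by
      have h1 := G.integrable_pow_mul volume 1
      have h0 := (G.integrable (μ := volume)).norm
      have heq : (fun ω : Euc d => (‖ω‖ + 1) * ‖G ω‖)
          = fun ω : Euc d => ‖ω‖ ^ 1 * ‖G ω‖ + ‖G ω‖ := by
        funext ω; ring
      rw [heq]
      exact h1.add h0
    have hlt := hint.lintegral_lt_top
    have hfun : (fun x : Euc d => (g x : ℂ)) = ⇑F := hF.symm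
    calc (∫⁻ ω : Euc d, ENNReal.ofReal ((‖ω‖ + 1) *
            ‖VectorFourier.fourierIntegral Real.fourierChar volume (innerₗ (Euc d))
              (fun x : Euc d => (g x : ℂ)) ω‖))
        = ∫⁻ ω : Euc d, ENNReal.ofReal ((‖ω‖ + 1) * ‖G ω‖) := by
          rw [hfun, ← hG]
      _ < ⊤ := hlt
end
end

section
/- Let x_1,…,x_n ∈ ℝ^d, let F_1 be a class of functions f: ℝ^d → ℝ with empirical L¹ norm (1/n)Σ_{i=1}^n |f(x_i)| ≤ 1 for every f ∈ F_1, and for k ∈ ℤ⁺ and M > 0 define N_k(M) := {Σ_{j=1}^k a_j f_j : f_j ∈ F_1, Σ_{j=1}^k |a_j| ≤ M}. Then for all δ > 0 and η > 0, the L¹ empirical covering numbers satisfy N₁(δ + η(M + 2δ), N_k(M), x_1^n) ≤ (e(M + 2δ)/δ)^k · (N₁(η, F_1, x_1^n))^k. -/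
/-- `h : Fin N → E → ℝ` is an `L¹` empirical `ε`-cover of the class `H` at points `x_1,…,x_n`;
the `L¹` empirical covering number `N₁(ε, H, x_1^n)` is the least such `N`. -/
def IsL1Cover {E : Type*} {n N : ℕ} (ε : ℝ) (H : Set (E → ℝ)) (x : Fin n → E)
    (h : Fin N → E → ℝ) : Prop :=
  ∀ f ∈ H, ∃ j : Fin N, (1 / (n : ℝ)) * ∑ i : Fin n, |f (x i) - h j (x i)| < ε

open Finset in
lemma card_sumLe (k B : ℕ) :
    ((Fintype.piFinset fun _ : Fin k => Finset.range (B+1)).filter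
      (fun y => ∑ j, y j ≤ B)).card ≤ (B + k).choose k := by
  classical
  have hcard : Fintype.card (Sym (Fin (k+1)) B) = (B + k).choose k := by
    rw [Sym.card_sym_eq_choose, Fintype.card_fin]
    have : k + 1 + B - 1 = B + k := by omega
    rw [this, Nat.choose_symm_add]
  set mult : (Fin k → ℕ) → Multiset (Fin (k+1)) := fun y =>
    (∑ j : Fin k, Multiset.replicate (y j) (Fin.castSucc j)) +
      Multiset.replicate (B - ∑ j, y j) (Fin.last k) with hmult
  have hcount : ∀ y j, Multiset.count (Fin.castSucc j) (mult y) = y j := by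
    intro y j
    simp only [hmult, Multiset.count_add, Multiset.count_replicate, Multiset.count_sum']
    rw [if_neg (Fin.castSucc_lt_last j).ne']
    simp [Fin.castSucc_inj]
  have hcardm : ∀ y, (∑ j, y j ≤ B) → Multiset.card (mult y) = B := by
    intro y hy
    simp only [hmult, Multiset.card_add, Multiset.card_replicate]
    have hcs : ∀ (su : Finset (Fin k)),
        Multiset.card (∑ j ∈ su, Multiset.replicate (y j) (Fin.castSucc j)) = ∑ j ∈ su, y j := by
      intro su
      induction su using Finset.induction_on with
      | empty => simp
      | insert _ _ h ih =>
        rw [Finset.sum_insert h, Finset.sum_insert h, Multiset.card_add,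
          Multiset.card_replicate, ih]
    rw [hcs]
    omega
  refine le_trans (Finset.card_le_card_of_injOn
    (t := (Finset.univ : Finset (Sym (Fin (k+1)) B)))
    ((fun y => if h : ∑ j, y j ≤ B then (⟨mult y, hcardm y h⟩ : Sym (Fin (k+1)) B)
      else (Sym.replicate B (Fin.last k) : Sym (Fin (k+1)) B)) :
      (Fin k → ℕ) → Sym (Fin (k+1)) B)
    (fun y _ => Finset.mem_univ _) ?_) ?_
  · intro y1 hy1 y2 hy2 hhh
    simp only [Finset.coe_filter, Set.mem_setOf_eq] at hy1 hy2
    beta_reduce at hhh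
    have e1 : (if h : ∑ j, y1 j ≤ B then (⟨mult y1, hcardm y1 h⟩ : Sym (Fin (k+1)) B)
        else Sym.replicate B (Fin.last k)) = (⟨mult y1, hcardm y1 hy1.2⟩ : Sym (Fin (k+1)) B) :=
      dif_pos hy1.2
    have e2 : (if h : ∑ j, y2 j ≤ B then (⟨mult y2, hcardm y2 h⟩ : Sym (Fin (k+1)) B)
        else Sym.replicate B (Fin.last k)) = (⟨mult y2, hcardm y2 hy2.2⟩ : Sym (Fin (k+1)) B) :=
      dif_pos hy2.2
    have hhh : mult y1 = mult y2 := congrArg Subtype.val (e1.symm.trans (hhh.trans e2))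
    funext j
    rw [← hcount y1 j, ← hcount y2 j, hhh]
  · rw [Finset.card_univ, hcard]

lemma card_intNet (k m : ℕ) :
    ((Fintype.piFinset fun _ : Fin k => Finset.Icc (-(m:ℤ)) (m:ℤ)).filter
      (fun z => ∑ j, (z j).natAbs ≤ m)).card ≤ (2*m + k).choose k := by
  classical
  refine le_trans (Finset.card_le_card_of_injOn
    (fun z j => if 0 < z j then 2*(z j).natAbs - 1 else 2*(z j).natAbs)
    ?_ ?_) (card_sumLe k (2*m))
  · intro z hz
    simp only [Finset.mem_coe, Finset.mem_filter, Fintype.mem_piFinset] at hz ⊢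
    obtain ⟨hzi, hzs⟩ := hz
    have hj : ∀ j, (z j).natAbs ≤ m := fun j =>
      le_trans (Finset.single_le_sum (f := fun j => (z j).natAbs)
        (fun _ _ => Nat.zero_le _) (Finset.mem_univ j)) hzs
    constructor
    · intro j
      rw [Finset.mem_range]
      have := hj j
      split_ifs <;> omega
    · calc ∑ j, (if 0 < z j then 2*(z j).natAbs - 1 else 2*(z j).natAbs)
          ≤ ∑ j, 2 * (z j).natAbs :=
            Finset.sum_le_sum fun j _ => by split_ifs <;> omega
        _ = 2 * ∑ j, (z j).natAbs := by rw [Finset.mul_sum]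
        _ ≤ 2 * m := by omega
  · intro z1 _ z2 _ hE
    funext j
    have := congrFun hE j
    simp only at this
    split_ifs at this <;> omega

lemma choose_le_pow_real (a k : ℕ) (hk : 0 < k) :
    (((a + k).choose k : ℕ) : ℝ) ≤ (Real.exp 1 * ((a:ℝ) + k) / k) ^ k := by
  have hkR : (0:ℝ) < k := Nat.cast_pos.mpr hk
  have hfac : (0:ℝ) < k.factorial := Nat.cast_pos.mpr k.factorial_pos
  have h1 : ((k.factorial * (a+k).choose k : ℕ) : ℝ) ≤ ((a:ℝ) + k)^k := by
    have h := Nat.descFactorial_le_pow (a+k) k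
    rw [Nat.descFactorial_eq_factorial_mul_choose] at h
    calc ((k.factorial * (a+k).choose k : ℕ):ℝ) ≤ (((a+k)^k : ℕ):ℝ) := Nat.cast_le.mpr h
      _ = ((a:ℝ)+k)^k := by push_cast; ring
  have h2 : ((k:ℝ))^k ≤ Real.exp 1 ^ k * k.factorial := by
    have hsum := Real.sum_le_exp_of_nonneg (x := (k:ℝ)) (by positivity) (k+1)
    have hterm : ((k:ℝ))^k / k.factorial ≤ ∑ i ∈ Finset.range (k+1), (k:ℝ)^i / i.factorial :=
      Finset.single_le_sum (f := fun i => (k:ℝ)^i / i.factorial) (fun i _ => by positivity) (Finset.self_mem_range_succ k)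
    have hle : ((k:ℝ))^k / k.factorial ≤ Real.exp 1 ^ k := by
      rw [← Real.exp_nat_mul]
      simpa using hterm.trans hsum
    calc ((k:ℝ))^k = ((k:ℝ))^k / k.factorial * k.factorial := by field_simp
      _ ≤ Real.exp 1 ^ k * k.factorial := mul_le_mul_of_nonneg_right hle hfac.le
  have hgoal : ((a + k).choose k : ℝ) * (k:ℝ)^k ≤ Real.exp 1 ^ k * ((a:ℝ)+k)^k := by
    calc ((a + k).choose k : ℝ) * (k:ℝ)^k
        ≤ ((a + k).choose k : ℝ) * (Real.exp 1 ^ k * k.factorial) :=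
          mul_le_mul_of_nonneg_left h2 (Nat.cast_nonneg _)
      _ = Real.exp 1 ^ k * ((k.factorial * (a+k).choose k : ℕ):ℝ) := by push_cast; ring
      _ ≤ Real.exp 1 ^ k * ((a:ℝ)+k)^k :=
          mul_le_mul_of_nonneg_left h1 (by positivity)
  rw [div_pow, mul_pow, le_div_iff₀ (by positivity)]
  exact hgoal

/-- Covering numbers for `ℓ¹`-combinations: if every `f ∈ F₁` has empirical `L¹` norm at most
`1` and `N_k(M) = {Σ_{j=1}^k a_j f_j : f_j ∈ F₁, Σ|a_j| ≤ M}`, then from any `η`-cover of `F₁`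
of size `N₁` one obtains a `(δ + η(M+2δ))`-cover of `N_k(M)` of size at most
`(e(M+2δ)/δ)^k · N₁^k`; i.e. `N₁(δ + η(M+2δ), N_k(M), x) ≤ (e(M+2δ)/δ)^k (N₁(η, F₁, x))^k`. -/
theorem statement_19 {E : Type*} (n : ℕ) (hn : 0 < n) (x : Fin n → E)
    (F1 : Set (E → ℝ))
    (hF1 : ∀ f ∈ F1, (1 / (n : ℝ)) * ∑ i : Fin n, |f (x i)| ≤ 1)
    (k : ℕ) (hk : 0 < k) (M δ η : ℝ) (hM : 0 < M) (hδ : 0 < δ) (hη : 0 < η)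
    (N1 : ℕ) (h1 : Fin N1 → E → ℝ) (hcover1 : IsL1Cover η F1 x h1) :
    ∃ (N : ℕ) (h : Fin N → E → ℝ),
      (N : ℝ) ≤ (Real.exp 1 * (M + 2 * δ) / δ) ^ k * (N1 : ℝ) ^ k ∧
      IsL1Cover (δ + η * (M + 2 * δ))
        {g | ∃ (a : Fin k → ℝ) (f : Fin k → E → ℝ),
          (∀ j, f j ∈ F1) ∧ (∀ y, g y = ∑ j : Fin k, a j * f j y) ∧
          (∑ j : Fin k, |a j|) ≤ M} x h := by
  classical
  have hkR : (0:ℝ) < k := Nat.cast_pos.mpr hk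
  have hk0 : (k:ℝ) ≠ 0 := hkR.ne'
  set s : ℝ := 2 * δ / k with hs_def
  have hs0 : 0 < s := by positivity
  set m : ℕ := ⌊(M + δ) * k / (2 * δ)⌋₊ with hm_def
  set T : Finset (Fin k → ℤ) :=
    (Fintype.piFinset fun _ : Fin k => Finset.Icc (-(m:ℤ)) (m:ℤ)).filter
      (fun z => ∑ j, (z j).natAbs ≤ m) with hT_def
  let ι := {z // z ∈ T} × (Fin k → Fin N1)
  let e : ι ≃ Fin (Fintype.card ι) := Fintype.equivFin ι
  refine ⟨Fintype.card ι,
    fun p y => ∑ j, s * ((((e.symm p).1 : Fin k → ℤ) j : ℝ)) * h1 ((e.symm p).2 j) y, ?_, ?_⟩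
  · -- cardinality bound
    have hTcard : (T.card : ℝ) ≤ (Real.exp 1 * (M + 2*δ) / δ) ^ k := by
      have h1' : T.card ≤ (2*m + k).choose k := card_intNet k m
      have h2' : (((2*m) + k).choose k : ℝ) ≤ (Real.exp 1 * (((2*m:ℕ):ℝ) + k) / k) ^ k :=
        choose_le_pow_real (2*m) k hk
      have hm2 : (m:ℝ) * (2*δ) ≤ (M+δ)*k := by
        have hm_le : (m : ℝ) ≤ (M + δ) * k / (2*δ) := Nat.floor_le (by positivity)
        rw [← le_div_iff₀ (by positivity)]
        exact hm_le
      have hb : Real.exp 1 * (((2*m:ℕ):ℝ) + (k:ℕ)) / k ≤ Real.exp 1 * (M + 2*δ) / δ := by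
        rw [div_le_div_iff₀ hkR hδ]
        have he := (Real.exp_pos 1).le
        have hstep : (((2*m:ℕ):ℝ) + k)*δ ≤ (M+2*δ)*k := by push_cast; nlinarith
        nlinarith [mul_le_mul_of_nonneg_left hstep he]
      calc (T.card:ℝ) ≤ (((2*m) + k).choose k : ℝ) := Nat.cast_le.mpr h1'
        _ ≤ (Real.exp 1 * (((2*m:ℕ):ℝ) + k) / k) ^ k := h2'
        _ ≤ (Real.exp 1 * (M + 2*δ) / δ) ^ k := pow_le_pow_left₀ (by positivity) hb k
    have hcι : (Fintype.card ι : ℝ) = (T.card : ℝ) * (N1:ℝ)^k := by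
      have : Fintype.card ι = T.card * N1 ^ k := by
        simp [ι, Fintype.card_coe, Fintype.card_fun]
      rw [this]; push_cast; ring
    rw [hcι]
    exact mul_le_mul_of_nonneg_right hTcard (by positivity)
  · -- cover property
    rintro g ⟨a, f, hf, hgy, ha⟩
    choose c hc using fun j => hcover1 (f j) (hf j)
    set t : Fin k → ℤ := fun j => round (a j / s) with ht_def
    have hA : ∀ j, |a j - s * t j| ≤ δ / k := by
      intro j
      have h0 : |a j / s - (t j : ℝ)| ≤ 1/2 := abs_sub_round _
      have heq : a j - s * t j = s * (a j / s - t j) := by field_simp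
      rw [heq, abs_mul, abs_of_pos hs0]
      calc s * |a j / s - (t j:ℝ)| ≤ s * (1/2) :=
          mul_le_mul_of_nonneg_left h0 hs0.le
        _ = δ / k := by rw [hs_def]; ring
    have hnat : ∀ j, ((t j).natAbs : ℝ) = |((t j:ℤ) : ℝ)| := by
      intro j; rw [Nat.cast_natAbs, Int.cast_abs]
    have hTsum : ∑ j, (t j).natAbs ≤ m := by
      have hb : ∀ j, s * |((t j:ℤ) : ℝ)| ≤ |a j| + δ / k := by
        intro j
        have habs := abs_sub (a j) (a j - s * ((t j:ℤ):ℝ))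
        have he2 : a j - (a j - s * ((t j:ℤ):ℝ)) = s * ((t j:ℤ):ℝ) := by ring
        rw [he2] at habs
        calc s * |((t j:ℤ):ℝ)| = |s * ((t j:ℤ):ℝ)| := by rw [abs_mul, abs_of_pos hs0]
          _ ≤ |a j| + |a j - s * t j| := habs
          _ ≤ |a j| + δ/k := by linarith [hA j]
      have hsum : s * ∑ j, |((t j:ℤ):ℝ)| ≤ M + δ := by
        rw [Finset.mul_sum]
        calc ∑ j, s * |((t j:ℤ):ℝ)| ≤ ∑ j : Fin k, (|a j| + δ/k) :=
            Finset.sum_le_sum (fun j _ => hb j)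
          _ = (∑ j, |a j|) + (k:ℝ) * (δ/k) := by
              rw [Finset.sum_add_distrib, Finset.sum_const, Finset.card_univ,
                Fintype.card_fin, nsmul_eq_mul]
          _ ≤ M + δ := by
              have : (k:ℝ)*(δ/k) = δ := by field_simp
              rw [this]; linarith
      have hreal : (∑ j, (((t j).natAbs:ℕ) :ℝ)) ≤ (M + δ) * k / (2*δ) := by
        have h3 : (∑ j, (((t j).natAbs:ℕ):ℝ)) = ∑ j, |((t j:ℤ):ℝ)| :=
          Finset.sum_congr rfl (fun j _ => hnat j)
        have h4 : (∑ j, |((t j:ℤ):ℝ)|) ≤ (M+δ)/s := by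
          rw [le_div_iff₀ hs0]
          linarith [hsum]
        have h5 : (M+δ)/s = (M+δ)*k/(2*δ) := by
          rw [hs_def]; field_simp; try ring
        rw [h3]; rw [h5] at h4; exact h4
      exact Nat.le_floor (by push_cast at hreal ⊢; exact hreal)
    have htmem : t ∈ T := by
      rw [hT_def, Finset.mem_filter, Fintype.mem_piFinset]
      refine ⟨fun j => ?_, hTsum⟩
      have hj : (t j).natAbs ≤ m :=
        le_trans (Finset.single_le_sum (f := fun j => (t j).natAbs)
          (fun _ _ => Nat.zero_le _) (Finset.mem_univ j)) hTsum
      rw [Finset.mem_Icc]; omega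
    refine ⟨e ⟨⟨t, htmem⟩, c⟩, ?_⟩
    simp only [Equiv.symm_apply_apply]
    have hn0 : (0:ℝ) < n := Nat.cast_pos.mpr hn
    have hBj : ∀ j, (1/(n:ℝ)) * ∑ i, |h1 (c j) (x i)| ≤ 1 + η := by
      intro j
      have hpt : ∀ i, |h1 (c j) (x i)| ≤ |f j (x i)| + |f j (x i) - h1 (c j) (x i)| := by
        intro i
        have habs := abs_sub (f j (x i)) (f j (x i) - h1 (c j) (x i))
        have he3 : f j (x i) - (f j (x i) - h1 (c j) (x i)) = h1 (c j) (x i) := by ring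
        rw [he3] at habs
        exact habs
      calc (1/(n:ℝ)) * ∑ i, |h1 (c j) (x i)|
          ≤ (1/(n:ℝ)) * ∑ i, (|f j (x i)| + |f j (x i) - h1 (c j) (x i)|) :=
            mul_le_mul_of_nonneg_left (Finset.sum_le_sum fun i _ => hpt i) (by positivity)
        _ = (1/(n:ℝ)) * ∑ i, |f j (x i)| + (1/(n:ℝ)) * ∑ i, |f j (x i) - h1 (c j) (x i)| := by
            rw [Finset.sum_add_distrib, mul_add]
        _ ≤ 1 + η := add_le_add (hF1 (f j) (hf j)) (hc j).le
    have hpoint : ∀ i, |g (x i) - ∑ j, s * ((t j:ℤ):ℝ) * h1 (c j) (x i)|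
        ≤ ∑ j, (|a j| * |f j (x i) - h1 (c j) (x i)| + (δ/k) * |h1 (c j) (x i)|) := by
      intro i
      rw [hgy (x i), ← Finset.sum_sub_distrib]
      refine (Finset.abs_sum_le_sum_abs _ _).trans (Finset.sum_le_sum fun j _ => ?_)
      have hsplit : a j * f j (x i) - s * ((t j:ℤ):ℝ) * h1 (c j) (x i)
          = a j * (f j (x i) - h1 (c j) (x i)) + (a j - s * t j) * h1 (c j) (x i) := by
        push_cast; ring
      rw [hsplit]
      calc |a j * (f j (x i) - h1 (c j) (x i)) + (a j - s * t j) * h1 (c j) (x i)|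
          ≤ |a j| * |f j (x i) - h1 (c j) (x i)| + |a j - s * t j| * |h1 (c j) (x i)| := by
            refine (abs_add_le _ _).trans ?_
            rw [abs_mul, abs_mul]
        _ ≤ _ := by
            have := mul_le_mul_of_nonneg_right (hA j) (abs_nonneg (h1 (c j) (x i)))
            linarith
    have hsplit2 : ∀ (cc dd : ℝ) (u v : Fin n → ℝ),
        (1/(n:ℝ)) * ∑ i, (cc * u i + dd * v i)
          = cc * ((1/(n:ℝ)) * ∑ i, u i) + dd * ((1/(n:ℝ)) * ∑ i, v i) := by
      intro cc dd u v
      rw [Finset.sum_add_distrib, ← Finset.mul_sum, ← Finset.mul_sum]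
      ring
    calc (1/(n:ℝ)) * ∑ i, |g (x i) - ∑ j, s * ((t j:ℤ):ℝ) * h1 (c j) (x i)|
        ≤ (1/(n:ℝ)) * ∑ i, ∑ j, (|a j| * |f j (x i) - h1 (c j) (x i)| + (δ/k) * |h1 (c j) (x i)|) :=
          mul_le_mul_of_nonneg_left (Finset.sum_le_sum fun i _ => hpoint i) (by positivity)
      _ = ∑ j, (|a j| * ((1/(n:ℝ)) * ∑ i, |f j (x i) - h1 (c j) (x i)|)
            + (δ/k) * ((1/(n:ℝ)) * ∑ i, |h1 (c j) (x i)|)) := by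
          rw [Finset.sum_comm, Finset.mul_sum]
          exact Finset.sum_congr rfl fun j _ => hsplit2 _ _ _ _
      _ ≤ ∑ j : Fin k, (|a j| * η + (δ/k) * (1 + η)) :=
          Finset.sum_le_sum fun j _ => add_le_add
            (mul_le_mul_of_nonneg_left (hc j).le (abs_nonneg _))
            (mul_le_mul_of_nonneg_left (hBj j) (by positivity))
      _ = (∑ j, |a j|) * η + (k:ℝ) * ((δ/k) * (1+η)) := by
          rw [Finset.sum_add_distrib, ← Finset.sum_mul, Finset.sum_const, Finset.card_univ,
            Fintype.card_fin, nsmul_eq_mul]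
      _ ≤ M * η + δ * (1 + η) := by
          have h6 : (k:ℝ) * ((δ/k) * (1+η)) = δ * (1+η) := by field_simp; try ring
          rw [h6]
          have := mul_le_mul_of_nonneg_right ha hη.le
          linarith
      _ < δ + η * (M + 2*δ) := by nlinarith [mul_pos hη hδ]
end
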